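/- arXiv:1012.2811 — 9 statements merged into one kernel-verified Lean document; each statement's English description precedes it below -/
import Mathlib

section
/- Let $D$ be a linear subspace of $\ell^\infty(\Omega)$ and $E : D \to \mathbb{R}$ a map. Then $E$ is coherent (i.e., for all $n \ge 1$, reals $c_1,\dots,c_n$ and $X_1,\dots,X_n \in D$, $\sup_{\omega \in \Omega} \sum_{i=1}^n c_i (X_i(\omega) - E(X_i)) \ge 0$) if and only if $E$ is linear and internal (i.e., $\inf X \le E(X) \le \sup X$ for all $X \in D$). -/
/-!
A gamble with constant gain `k` can be bought with coefficients `c` or sold with `-c`, so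
coherence forces `k = 0`. The combinations `(X, Y, X + Y)` with coefficients `(1, 1, -1)` and
`(c • X, X)` with `(1, -c)` have constant gains `E (X + Y) - E X - E Y` and `c * E X - E (c • X)`,
which gives linearity; a single gamble with coefficient `±1` gives internality. Conversely, if `E`
is linear, the gain of `∑ cᵢ (Xᵢ - E Xᵢ)` is `Y - E Y` for `Y = ∑ cᵢ • Xᵢ ∈ D`, and internality
says exactly that its supremum is nonnegative.
-/

open MeasureTheory Set

namespace FAP

variable {Ω : Type*}

/-- A finitely additive probability on the power set of `Ω`. -/
def IsFAP (P : Set Ω → ℝ) : Prop :=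
  P univ = 1 ∧ (∀ A : Set Ω, 0 ≤ P A) ∧
    ∀ A B : Set Ω, Disjoint A B → P (A ∪ B) = P A + P B

/-- A finitely additive probability on the σ-field of a measurable space `Ω`. -/
def IsFAPm [MeasurableSpace Ω] (P : Set Ω → ℝ) : Prop :=
  P univ = 1 ∧ (∀ A : Set Ω, MeasurableSet A → 0 ≤ P A) ∧
    ∀ A B : Set Ω, MeasurableSet A → MeasurableSet B → Disjoint A B →
      P (A ∪ B) = P A + P B

/-- The finitely additive integral of a bounded function `X` with respect to a
finitely additive probability `P`, defined via the layer-cake formula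
(which agrees with the uniform-limit-of-simple-functions definition). -/
noncomputable def faIntegral (P : Set Ω → ℝ) (X : Ω → ℝ) : ℝ :=
  (∫ t in Ioi (0 : ℝ), P {ω | t < X ω}) -
    (∫ t in Iio (0 : ℝ), (1 - P {ω | t < X ω}))

/-- `P` is absolutely continuous with respect to the (countably additive) measure `P₀`. -/
def AC [MeasurableSpace Ω] (P : Set Ω → ℝ) (P₀ : Measure Ω) : Prop :=
  ∀ A : Set Ω, MeasurableSet A → P₀ A = 0 → P A = 0

/-- `P` and `P₀` have the same null sets. -/
def EquivP [MeasurableSpace Ω] (P : Set Ω → ℝ) (P₀ : Measure Ω) : Prop :=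
  ∀ A : Set Ω, MeasurableSet A → (P A = 0 ↔ P₀ A = 0)

/-- `P` is pure: the only countably additive measure `Γ` with `0 ≤ Γ ≤ P` is `Γ = 0`. -/
def IsPure [MeasurableSpace Ω] (P : Set Ω → ℝ) : Prop :=
  ∀ Γ : Measure Ω, (∀ A : Set Ω, MeasurableSet A → Γ A ≤ ENNReal.ofReal (P A)) → Γ = 0

/-- The essential supremum `inf {a : P₀(X > a) = 0}` of a random variable `X`. -/
noncomputable def essSupR [MeasurableSpace Ω] (P₀ : Measure Ω) (X : Ω → ℝ) : ℝ :=
  sInf {a : ℝ | P₀ {ω | a < X ω} = 0}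

end FAP

open FAP

namespace Coherence

variable {Ω : Type*} (D : Submodule ℝ (Ω → ℝ)) (E : (Ω → ℝ) → ℝ)

def Coherent : Prop :=
  ∀ (n : ℕ), 1 ≤ n → ∀ (c : Fin n → ℝ) (X : Fin n → (Ω → ℝ)), (∀ i, X i ∈ D) →
    0 ≤ ⨆ ω : Ω, ∑ i, c i * (X i ω - E (X i))

variable {D E}

namespace Coherent

variable (h : Coherent D E)
include h

theorem ciSup_smul_gain_nonneg (c : ℝ) {X : Ω → ℝ} (hX : X ∈ D) :
    0 ≤ ⨆ ω, c * (X ω - E X) := by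
  simpa using h 1 le_rfl ![c] ![X] (by simp [hX])

variable [Nonempty Ω]

theorem eq_zero_of_gain_eq_const {n : ℕ} (hn : 1 ≤ n) {c : Fin n → ℝ} {X : Fin n → Ω → ℝ}
    (hX : ∀ i, X i ∈ D) {k : ℝ} (hk : ∀ ω, ∑ i, c i * (X i ω - E (X i)) = k) : k = 0 := by
  have hbuy := h n hn c X hX
  have hsell := h n hn (-c) X hX
  simp only [Pi.neg_apply, neg_mul, Finset.sum_neg_distrib, hk, ciSup_const] at hbuy hsell
  linarith

theorem map_add {X Y : Ω → ℝ} (hX : X ∈ D) (hY : Y ∈ D) : E (X + Y) = E X + E Y := by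
  have hk := h.eq_zero_of_gain_eq_const (by norm_num) (c := ![1, 1, -1]) (X := ![X, Y, X + Y])
    (by simp [Fin.forall_fin_succ, hX, hY, D.add_mem hX hY]) (k := E (X + Y) - E X - E Y)
    fun ω => by
      simp only [Fin.sum_univ_succ, Fin.sum_univ_zero, Matrix.cons_val_zero, Matrix.cons_val_succ,
        Pi.add_apply]
      ring
  linarith

theorem map_smul (c : ℝ) {X : Ω → ℝ} (hX : X ∈ D) : E (c • X) = c * E X := by
  have hk := h.eq_zero_of_gain_eq_const (by norm_num) (c := ![1, -c]) (X := ![c • X, X])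
    (by simp [Fin.forall_fin_succ, hX, D.smul_mem c hX]) (k := c * E X - E (c • X))
    fun ω => by
      simp only [Fin.sum_univ_succ, Fin.sum_univ_zero, Matrix.cons_val_zero, Matrix.cons_val_succ,
        Pi.smul_apply, smul_eq_mul]
      ring
  linarith

theorem map_le_ciSup {X : Ω → ℝ} (hX : X ∈ D) (hb : BddAbove (range X)) :
    E X ≤ ⨆ ω, X ω := by
  have hgain := h.ciSup_smul_gain_nonneg 1 hX
  simp only [one_mul, ← ciSup_sub hb] at hgain
  linarith

theorem ciInf_le_map {X : Ω → ℝ} (hX : X ∈ D) (hb : BddBelow (range X)) :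
    ⨅ ω, X ω ≤ E X := by
  have hgain := h.ciSup_smul_gain_nonneg (-1) hX
  rw [← Real.mul_iInf_of_nonpos (by norm_num), ← ciInf_sub hb] at hgain
  linarith

end Coherent

theorem map_sum_smul (hadd : ∀ X ∈ D, ∀ Y ∈ D, E (X + Y) = E X + E Y)
    (hsmul : ∀ (c : ℝ), ∀ X ∈ D, E (c • X) = c * E X) {ι : Type*} (s : Finset ι)
    (c : ι → ℝ) {X : ι → Ω → ℝ} (hX : ∀ i, X i ∈ D) :
    E (∑ i ∈ s, c i • X i) = ∑ i ∈ s, c i * E (X i) := by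
  let L : D →ₗ[ℝ] ℝ :=
    { toFun := fun Y => E Y
      map_add' := fun Y Z => hadd Y Y.2 Z Z.2
      map_smul' := fun c Y => hsmul c Y Y.2 }
  have hL := map_sum L (fun i => c i • (⟨X i, hX i⟩ : D)) s
  simp only [map_smul, smul_eq_mul] at hL
  convert hL using 1
  · change E _ = E (↑(∑ i ∈ s, c i • (⟨X i, hX i⟩ : D)))
    simp only [Submodule.coe_sum, Submodule.coe_smul]
  · rfl

theorem coherent_of_linear_of_le_ciSup [Nonempty Ω] (hbdd : ∀ X ∈ D, BddAbove (range X))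
    (hadd : ∀ X ∈ D, ∀ Y ∈ D, E (X + Y) = E X + E Y)
    (hsmul : ∀ (c : ℝ), ∀ X ∈ D, E (c • X) = c * E X)
    (hle : ∀ X ∈ D, E X ≤ ⨆ ω, X ω) : Coherent D E := by
  intro n _ c X hX
  set Y := ∑ i, c i • X i
  have hY : Y ∈ D := D.sum_mem fun i _ => D.smul_mem _ (hX i)
  have hgain : ∀ ω, ∑ i, c i * (X i ω - E (X i)) = Y ω - E Y := fun ω => by
    simp [Y, map_sum_smul hadd hsmul _ c hX, Finset.sum_apply, mul_sub]
  simp only [hgain, ← ciSup_sub (hbdd Y hY)]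
  linarith [hle Y hY]

end Coherence

open Coherence

/-- E on a linear subspace D of bounded functions is coherent iff
it is linear and internal. -/
theorem stmt0 {Ω : Type*} [Nonempty Ω]
    (D : Submodule ℝ (Ω → ℝ))
    (hbdd : ∀ X ∈ D, ∃ M : ℝ, ∀ ω, |X ω| ≤ M)
    (E : (Ω → ℝ) → ℝ) :
    (∀ (n : ℕ), 1 ≤ n → ∀ (c : Fin n → ℝ) (X : Fin n → (Ω → ℝ)),
        (∀ i, X i ∈ D) →
        0 ≤ ⨆ ω : Ω, ∑ i, c i * (X i ω - E (X i)))
    ↔ ((∀ X ∈ D, ∀ Y ∈ D, E (X + Y) = E X + E Y) ∧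
       (∀ (c : ℝ), ∀ X ∈ D, E (c • X) = c * E X) ∧
       (∀ X ∈ D, (⨅ ω : Ω, X ω) ≤ E X ∧ E X ≤ ⨆ ω : Ω, X ω)) := by
  have hbounded : ∀ X ∈ D, Bornology.IsBounded (range X) := fun X hX => by
    obtain ⟨M, hM⟩ := hbdd X hX
    exact isBounded_iff_forall_norm_le.2 ⟨M, by rintro _ ⟨ω, rfl⟩; exact hM ω⟩
  constructor
  · intro (h : Coherent D E)
    exact ⟨fun X hX Y hY => h.map_add hX hY, fun c X hX => h.map_smul c hX, fun X hX =>
      ⟨h.ciInf_le_map hX (hbounded X hX).bddBelow, h.map_le_ciSup hX (hbounded X hX).bddAbove⟩⟩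
  · rintro ⟨hadd, hsmul, hint⟩
    exact coherent_of_linear_of_le_ciSup (fun X hX => (hbounded X hX).bddAbove) hadd hsmul
      fun X hX => (hint X hX).2
end

section
/- A map $E : D \to \mathbb{R}$ on a set $D \subset \ell^\infty(\Omega)$ is coherent if and only if there exists a finitely additive probability $P$ on $\mathcal{P}(\Omega)$ such that $E(X) = \int X \, dP$ for every $X \in D$. -/
/-!
Both directions go through *means*: linear functionals `g` on the bounded functions with
`g Y ≤ sup Y`. Coherence of `E` says exactly that `sup` is nonnegative on the span of the
functions `X - E X` (`X ∈ D`), so Hahn–Banach extends `0` on that span to a mean, which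
equals `E` on `D`. Conversely, finite additivity makes `sup` nonnegative on the span of the
functions `𝟙_A - P A`, which gives a mean with `g 𝟙_A = P A`. A mean agrees with the
layer-cake integral against `A ↦ g 𝟙_A`, since both are squeezed, up to the mesh, between
the same Riemann sums of the survival function `t ↦ P {X > t}`; and a mean is coherent on
any set of bounded functions, as `g (∑ cᵢ (Xᵢ - g Xᵢ)) = 0`.
-/

open MeasureTheory Set

open FAP

namespace FAP

variable {Ω : Type*}

section FinitelyAdditive

variable {P : Set Ω → ℝ}

theorem IsFAP.empty (hP : IsFAP P) : P ∅ = 0 := by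
  have h := hP.2.2 ∅ ∅ (disjoint_empty ∅)
  rw [empty_union] at h
  linarith

theorem IsFAP.inter_add_diff (hP : IsFAP P) (A B : Set Ω) : P (A ∩ B) + P (A \ B) = P A := by
  rw [← hP.2.2 _ _ (disjoint_sdiff_inter.symm), inter_union_sdiff]

theorem IsFAP.mono (hP : IsFAP P) {A B : Set Ω} (h : A ⊆ B) : P A ≤ P B := by
  have := hP.inter_add_diff B A
  rw [inter_eq_right.2 h] at this
  linarith [hP.2.1 (B \ A)]

theorem isFAP_indicator_apply (ω : Ω) : IsFAP fun A : Set Ω ↦ A.indicator 1 ω := by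
  refine ⟨by simp, fun A ↦ indicator_nonneg (fun _ _ ↦ zero_le_one) ω, fun A B hAB ↦ ?_⟩
  simp [indicator_union_of_disjoint hAB]

theorem IsFAP.sum_mul_inter_le {ι : Type*} [DecidableEq ι] (hP : IsFAP P) (c : ι → ℝ)
    (A : ι → Set Ω) (s : Finset ι) (B : Set Ω) (M : ℝ)
    (h : ∀ ω ∈ B, ∑ i ∈ s, c i * (A i).indicator 1 ω ≤ M) :
    ∑ i ∈ s, c i * P (A i ∩ B) ≤ M * P B := by
  induction s using Finset.induction_on generalizing B M with
  | empty =>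
    rcases B.eq_empty_or_nonempty with rfl | ⟨ω, hω⟩
    · simp [hP.empty]
    · simpa using mul_nonneg (by simpa using h ω hω) (hP.2.1 B)
  | insert j s hj ih =>
    have h_in := ih (B ∩ A j) (M - c j) fun ω hω ↦ by
      have := h ω hω.1
      rw [Finset.sum_insert hj, indicator_of_mem hω.2, Pi.one_apply] at this
      linarith
    have h_out := ih (B \ A j) M fun ω hω ↦ by
      simpa [Finset.sum_insert hj, indicator_of_notMem hω.2] using h ω hω.1
    have hsplit (i : ι) : P (A i ∩ B) = P (A i ∩ (B ∩ A j)) + P (A i ∩ (B \ A j)) := by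
      rw [← hP.inter_add_diff (A i ∩ B) (A j), inter_assoc, inter_sdiff_assoc]
    rw [Finset.sum_insert hj, Finset.sum_congr rfl fun i _ ↦ by rw [hsplit i, mul_add],
      Finset.sum_add_distrib, ← hP.inter_add_diff B (A j), inter_comm (A j)]
    linarith

end FinitelyAdditive

section RiemannSums

def rightSum (f : ℝ → ℝ) (a δ : ℝ) (K : ℕ) : ℝ :=
  ∑ k ∈ Finset.range K, δ * f (a + δ * (k + 1))

theorem integral_eq_mul_integral_comp (f : ℝ → ℝ) (a δ : ℝ) (K : ℕ) :
    ∫ t in a..a + δ * K, f t = δ * ∫ x in (0 : ℝ)..0 + K, f (a + δ * x) := by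
  simp

variable {f : ℝ → ℝ} {a δ : ℝ} {K : ℕ}

theorem AntitoneOn.comp_add_mul (hδ : 0 ≤ δ) (hf : AntitoneOn f (Icc a (a + δ * K))) :
    AntitoneOn (fun x ↦ f (a + δ * x)) (Icc 0 (0 + K)) := by
  intro x hx y hy hxy
  refine hf ⟨?_, ?_⟩ ⟨?_, ?_⟩ (by gcongr) <;> nlinarith [hx.1, hx.2, hy.1, hy.2]

theorem AntitoneOn.rightSum_le_integral (hδ : 0 ≤ δ) (hf : AntitoneOn f (Icc a (a + δ * K))) :
    rightSum f a δ K ≤ ∫ t in a..a + δ * K, f t := by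
  rw [integral_eq_mul_integral_comp, rightSum, ← Finset.mul_sum]
  gcongr
  refine le_of_eq_of_le (Finset.sum_congr rfl fun k _ ↦ ?_) (hf.comp_add_mul hδ).sum_le_integral
  push_cast
  ring_nf

theorem AntitoneOn.integral_le_rightSum_add (hδ : 0 ≤ δ)
    (hf : AntitoneOn f (Icc a (a + δ * K))) :
    ∫ t in a..a + δ * K, f t ≤ rightSum f a δ K + δ * (f a - f (a + δ * K)) := by
  have htel : ∑ k ∈ Finset.range K, (f (a + δ * k) - f (a + δ * (k + 1))) =
      f a - f (a + δ * K) := by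
    simpa using Finset.sum_range_sub' (fun k : ℕ ↦ f (a + δ * k)) K
  rw [integral_eq_mul_integral_comp, rightSum, ← htel, ← Finset.mul_sum, ← mul_add,
    ← Finset.sum_add_distrib]
  gcongr
  refine (hf.comp_add_mul hδ).integral_le_sum.trans_eq (Finset.sum_congr rfl fun k _ ↦ ?_)
  ring_nf

end RiemannSums

section LayerCake

def survival (P : Set Ω → ℝ) (X : Ω → ℝ) (t : ℝ) : ℝ := P {ω | t < X ω}

variable {P : Set Ω → ℝ} {X : Ω → ℝ}

theorem IsFAP.antitone_survival (hP : IsFAP P) (X : Ω → ℝ) : Antitone (survival P X) :=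
  fun _ _ hst ↦ hP.mono fun _ (h : _ < _) ↦ hst.trans_lt h

theorem IsFAP.survival_eq_one (hP : IsFAP P) {t : ℝ} (h : ∀ ω, t < X ω) :
    survival P X t = 1 := by
  rw [survival, show {ω | t < X ω} = univ from eq_univ_of_forall h, hP.1]

theorem IsFAP.survival_eq_zero (hP : IsFAP P) {t : ℝ} (h : ∀ ω, X ω ≤ t) :
    survival P X t = 0 := by
  rw [survival, ← hP.empty]
  exact congrArg P (eq_empty_of_forall_notMem fun ω hω ↦ (h ω).not_gt hω)

theorem IsFAP.faIntegral_eq_add_integral (hP : IsFAP P) {a b : ℝ} (ha : a ≤ 0)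
    (hb : 0 ≤ b) (hXa : ∀ ω, a < X ω) (hXb : ∀ ω, X ω ≤ b) :
    faIntegral P X = a + ∫ t in a..b, survival P X t := by
  have hF : ∀ s t, IntervalIntegrable (survival P X) volume s t :=
    fun _ _ ↦ (hP.antitone_survival X).intervalIntegrable
  have hpos : ∫ t in Ioi 0, survival P X t = ∫ t in 0..b, survival P X t := by
    rw [intervalIntegral.integral_of_le hb, setIntegral_eq_of_subset_of_forall_sdiff_eq_zero
      measurableSet_Ioi Ioc_subset_Ioi_self]
    exact fun t ⟨ht0, htb⟩ ↦ hP.survival_eq_zero fun ω ↦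
      (hXb ω).trans (not_lt.1 fun h ↦ htb ⟨ht0, h.le⟩)
  have hneg : ∫ t in Iio 0, (1 - survival P X t) = ∫ t in a..0, (1 - survival P X t) := by
    rw [intervalIntegral.integral_of_le ha, integral_Ioc_eq_integral_Ioo,
      setIntegral_eq_of_subset_of_forall_sdiff_eq_zero measurableSet_Iio Ioo_subset_Iio_self]
    exact fun t ⟨ht0, hta⟩ ↦ by
      rw [hP.survival_eq_one fun ω ↦ (not_lt.1 fun h ↦ hta ⟨h, ht0⟩).trans_lt (hXa ω),
        sub_self]
  change (∫ t in Ioi 0, survival P X t) - ∫ t in Iio 0, (1 - survival P X t) = _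
  rw [hpos, hneg,
    intervalIntegral.integral_sub intervalIntegrable_const (hF a 0),
    ← intervalIntegral.integral_add_adjacent_intervals (hF a 0) (hF 0 b)]
  simp
  ring

theorem IsFAP.integral_survival_sub_rightSum_mem (hP : IsFAP P) {a δ : ℝ} {K : ℕ}
    (hδ : 0 ≤ δ) (hXa : ∀ ω, a < X ω) (hXb : ∀ ω, X ω ≤ a + δ * K) :
    (∫ t in a..a + δ * K, survival P X t) - rightSum (survival P X) a δ K ∈ Icc 0 δ := by
  have hF := (hP.antitone_survival X).antitoneOn (Icc a (a + δ * K))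
  have hupper := hF.integral_le_rightSum_add hδ
  rw [hP.survival_eq_one hXa, hP.survival_eq_zero hXb, sub_zero, mul_one] at hupper
  constructor <;> linarith [hF.rightSum_le_integral hδ]

theorem integral_indicator_Iio {x a b : ℝ} (hax : a ≤ x) (hxb : x ≤ b) :
    ∫ t in a..b, (Iio x).indicator (1 : ℝ → ℝ) t = x - a := by
  rw [intervalIntegral.integral_of_le (hax.trans hxb), integral_indicator measurableSet_Iio,
    Measure.restrict_restrict measurableSet_Iio]
  have : Iio x ∩ Ioc a b = Ioo a x := by
    ext t; simp only [mem_inter_iff, mem_Iio, mem_Ioc, mem_Ioo]; grind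
  simp [this, hax]

theorem integral_survival_indicator_apply (ω : Ω) {a b : ℝ} (hax : a ≤ X ω)
    (hxb : X ω ≤ b) :
    ∫ t in a..b, survival (fun A ↦ A.indicator 1 ω) X t = X ω - a := by
  rw [← integral_indicator_Iio hax hxb]
  rfl

theorem IsFAP.faIntegral_sub_rightSum_mem (hP : IsFAP P) {a δ : ℝ} {K : ℕ} (hδ : 0 ≤ δ)
    (ha : a ≤ 0) (hb : 0 ≤ a + δ * K) (hXa : ∀ ω, a < X ω)
    (hXb : ∀ ω, X ω ≤ a + δ * K) :
    faIntegral P X - a - rightSum (survival P X) a δ K ∈ Icc 0 δ := by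
  rw [hP.faIntegral_eq_add_integral ha hb hXa hXb, add_sub_cancel_left]
  exact hP.integral_survival_sub_rightSum_mem hδ hXa hXb

end LayerCake

def boundedFunctions (Ω : Type*) : Submodule ℝ (Ω → ℝ) where
  carrier := {f | ∃ M, ∀ ω, |f ω| ≤ M}
  add_mem' := fun ⟨M, hM⟩ ⟨N, hN⟩ ↦
    ⟨M + N, fun ω ↦ (abs_add_le _ _).trans (add_le_add (hM ω) (hN ω))⟩
  zero_mem' := ⟨0, by simp⟩
  smul_mem' := fun r _ ⟨M, hM⟩ ↦
    ⟨|r| * M, fun ω ↦ by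
      simpa [abs_mul] using mul_le_mul_of_nonneg_left (hM ω) (abs_nonneg r)⟩

noncomputable def bddIndicator (A : Set Ω) : boundedFunctions Ω :=
  ⟨A.indicator 1, 1, fun ω ↦ by by_cases h : ω ∈ A <;> simp [h]⟩

@[simp]
theorem coe_bddIndicator (A : Set Ω) : (bddIndicator A : Ω → ℝ) = A.indicator 1 := rfl

theorem bddIndicator_union_of_disjoint {A B : Set Ω} (h : Disjoint A B) :
    bddIndicator (A ∪ B) = bddIndicator A + bddIndicator B :=
  Subtype.ext (Set.indicator_union_of_disjoint h 1)

namespace boundedFunctions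

theorem bddAbove_range (Y : boundedFunctions Ω) : BddAbove (range (Y : Ω → ℝ)) :=
  let ⟨M, hM⟩ := Y.2
  ⟨M, forall_mem_range.2 fun ω ↦ (le_abs_self _).trans (hM ω)⟩

def IsMean (g : boundedFunctions Ω →ₗ[ℝ] ℝ) : Prop :=
  ∀ Y, g Y ≤ ⨆ ω, (Y : Ω → ℝ) ω

theorem exists_isMean_of_iSup_nonneg [Nonempty Ω] (W : Submodule ℝ (boundedFunctions Ω))
    (hW : ∀ Z ∈ W, 0 ≤ ⨆ ω, (Z : Ω → ℝ) ω) :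
    ∃ g : boundedFunctions Ω →ₗ[ℝ] ℝ, IsMean g ∧ ∀ Z ∈ W, g Z = 0 := by
  obtain ⟨g, hgW, hg⟩ := exists_extension_of_le_sublinear ⟨W, 0⟩
    (fun Y ↦ ⨆ ω, (Y : Ω → ℝ) ω) (fun c hc Y ↦ by simp [Real.mul_iSup_of_nonneg hc.le])
    (fun Y Z ↦ ciSup_le fun ω ↦
      add_le_add (le_ciSup (bddAbove_range Y) ω) (le_ciSup (bddAbove_range Z) ω))
    (fun Z ↦ hW Z Z.2)
  exact ⟨g, hg, fun Z hZ ↦ hgW ⟨Z, hZ⟩⟩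

namespace IsMean

variable [Nonempty Ω] {g : boundedFunctions Ω →ₗ[ℝ] ℝ}

theorem apply_le_of_forall_le (hg : IsMean g) {Y : boundedFunctions Ω} {M : ℝ}
    (h : ∀ ω, (Y : Ω → ℝ) ω ≤ M) : g Y ≤ M :=
  (hg Y).trans (ciSup_le h)

theorem le_apply_of_forall_le (hg : IsMean g) {Y : boundedFunctions Ω} {m : ℝ}
    (h : ∀ ω, m ≤ (Y : Ω → ℝ) ω) : m ≤ g Y := by
  have := hg.apply_le_of_forall_le (Y := -Y) (M := -m) fun ω ↦ by simpa using h ω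
  rw [map_neg] at this
  linarith

theorem apply_bddIndicator_univ (hg : IsMean g) : g (bddIndicator univ) = 1 :=
  le_antisymm (hg.apply_le_of_forall_le fun ω ↦ by simp)
    (hg.le_apply_of_forall_le fun ω ↦ by simp)

theorem isFAP_apply_bddIndicator (hg : IsMean g) : IsFAP fun A ↦ g (bddIndicator A) :=
  ⟨hg.apply_bddIndicator_univ,
    fun _ ↦ hg.le_apply_of_forall_le fun _ ↦ indicator_nonneg (by simp) _,
    fun _ _ h ↦ by simp only [bddIndicator_union_of_disjoint h, map_add]⟩

theorem apply_sub_rightSum_mem (hg : IsMean g) (X : boundedFunctions Ω) {a δ : ℝ} {K : ℕ}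
    (hδ : 0 ≤ δ) (hXa : ∀ ω, a < (X : Ω → ℝ) ω)
    (hXb : ∀ ω, (X : Ω → ℝ) ω ≤ a + δ * K) :
    g X - a - rightSum (survival (fun A ↦ g (bddIndicator A)) X) a δ K ∈ Icc 0 δ := by
  set s : boundedFunctions Ω :=
    ∑ k ∈ Finset.range K, δ • bddIndicator {ω | a + δ * (k + 1) < (X : Ω → ℝ) ω}
  have hs : ∀ ω,
      (s : Ω → ℝ) ω = rightSum (survival (fun A ↦ A.indicator 1 ω) X) a δ K := by
    intro ω
    simp [s, rightSum, survival]
  have hgs : g s = rightSum (survival (fun A ↦ g (bddIndicator A)) X) a δ K := by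
    simp [s, rightSum, survival]
  -- pointwise, this is the Riemann-sum estimate for the point mass at `ω`
  have hpt : ∀ ω,
      ((X - a • bddIndicator univ - s : boundedFunctions Ω) : Ω → ℝ) ω ∈ Icc 0 δ := by
    intro ω
    have := (isFAP_indicator_apply ω).integral_survival_sub_rightSum_mem hδ hXa hXb
    rw [integral_survival_indicator_apply ω (hXa ω).le (hXb ω), ← hs] at this
    simpa using this
  have := And.intro (hg.le_apply_of_forall_le fun ω ↦ (hpt ω).1)
    (hg.apply_le_of_forall_le fun ω ↦ (hpt ω).2)
  rwa [map_sub, map_sub, map_smul, hg.apply_bddIndicator_univ, smul_eq_mul, mul_one, hgs] at this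

theorem apply_eq_faIntegral (hg : IsMean g) (X : boundedFunctions Ω) :
    g X = faIntegral (fun A ↦ g (bddIndicator A)) X := by
  obtain ⟨M, hM⟩ := X.2
  have hM0 : 0 ≤ M := (abs_nonneg _).trans (hM (Classical.arbitrary Ω))
  refine eq_of_forall_dist_le fun δ hδ ↦ ?_
  obtain ⟨K, hK⟩ := exists_nat_ge (2 * (M + 1) / δ)
  have hδK : 2 * (M + 1) ≤ δ * K := by rw [div_le_iff₀ hδ] at hK; linarith
  have hXa : ∀ ω, -(M + 1) < (X : Ω → ℝ) ω := fun ω ↦ by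
    linarith [neg_abs_le ((X : Ω → ℝ) ω), hM ω]
  have hXb : ∀ ω, (X : Ω → ℝ) ω ≤ -(M + 1) + δ * K := fun ω ↦ by
    linarith [le_abs_self ((X : Ω → ℝ) ω), hM ω]
  have hgX := hg.apply_sub_rightSum_mem X hδ.le hXa hXb
  have hI := hg.isFAP_apply_bddIndicator.faIntegral_sub_rightSum_mem hδ.le (by linarith)
    (by linarith) hXa hXb
  rw [Real.dist_eq, abs_le]
  constructor <;> linarith [hgX.1, hgX.2, hI.1, hI.2]

end IsMean

end boundedFunctions

open boundedFunctions

def IsCoherent (D : Set (Ω → ℝ)) (E : (Ω → ℝ) → ℝ) : Prop :=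
  ∀ (n : ℕ), 1 ≤ n → ∀ (c : Fin n → ℝ) (X : Fin n → (Ω → ℝ)),
    (∀ i, X i ∈ D) → 0 ≤ ⨆ ω : Ω, ∑ i, c i * (X i ω - E (X i))

section Coherence

variable [Nonempty Ω] {D : Set (Ω → ℝ)} {E : (Ω → ℝ) → ℝ}

theorem IsCoherent.exists_isFAP (hbdd : ∀ X ∈ D, ∃ M : ℝ, ∀ ω, |X ω| ≤ M)
    (hE : IsCoherent D E) : ∃ P, IsFAP P ∧ ∀ X ∈ D, E X = faIntegral P X := by
  let F : D → boundedFunctions Ω := fun X ↦ ⟨X, hbdd X X.2⟩ - E X • bddIndicator univ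
  have hW : ∀ Z ∈ Submodule.span ℝ (range F), 0 ≤ ⨆ ω, (Z : Ω → ℝ) ω := by
    intro Z hZ
    obtain ⟨n, c, Y, rfl⟩ := Submodule.mem_span_set'.1 hZ
    choose X hX using fun i ↦ (Y i).2
    rcases n.eq_zero_or_pos with rfl | hn
    · simp
    convert hE n hn c (fun i ↦ X i) (fun i ↦ (X i).2) using 2 with ω
    simp [← hX, F]
  obtain ⟨g, hg, hgW⟩ := exists_isMean_of_iSup_nonneg _ hW
  refine ⟨_, hg.isFAP_apply_bddIndicator, fun X hX ↦ ?_⟩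
  have := hgW (F ⟨X, hX⟩) (Submodule.subset_span (mem_range_self _))
  rw [← hg.apply_eq_faIntegral ⟨X, hbdd X hX⟩]
  simp [F, hg.apply_bddIndicator_univ] at this
  linarith

theorem IsFAP.isCoherent {P : Set Ω → ℝ} (hP : IsFAP P)
    (hbdd : ∀ X ∈ D, ∃ M : ℝ, ∀ ω, |X ω| ≤ M)
    (hE : ∀ X ∈ D, E X = faIntegral P X) :
    IsCoherent D E := by
  let F : Set Ω → boundedFunctions Ω := fun A ↦ bddIndicator A - P A • bddIndicator univ
  have hW : ∀ Z ∈ Submodule.span ℝ (range F), 0 ≤ ⨆ ω, (Z : Ω → ℝ) ω := by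
    intro Z hZ
    obtain ⟨n, c, Y, hcY⟩ := Submodule.mem_span_set'.1 hZ
    choose A hA using fun i ↦ (Y i).2
    have hZω : ∀ ω,
        (Z : Ω → ℝ) ω = ∑ i, c i * (A i).indicator 1 ω - ∑ i, c i * P (A i) := by
      intro ω
      simp [← hcY, ← hA, F, mul_sub]
    have hle : ∀ ω ∈ univ, ∑ i, c i * (A i).indicator 1 ω ≤
        (⨆ ω, (Z : Ω → ℝ) ω) + ∑ i, c i * P (A i) := fun ω _ ↦ by
      linarith [hZω ω ▸ le_ciSup (bddAbove_range Z) ω]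
    have := hP.sum_mul_inter_le c A Finset.univ univ _ hle
    simp only [inter_univ, hP.1, mul_one] at this
    linarith
  obtain ⟨g, hg, hgW⟩ := exists_isMean_of_iSup_nonneg _ hW
  have hgP : (fun A ↦ g (bddIndicator A)) = P := funext fun A ↦ by
    have := hgW (F A) (Submodule.subset_span (mem_range_self A))
    simp [F, hg.apply_bddIndicator_univ] at this
    linarith
  intro n _ c X hX
  have hgX : ∀ i, g ⟨X i, hbdd _ (hX i)⟩ = E (X i) := fun i ↦ by
    rw [hE _ (hX i), ← hgP]
    exact hg.apply_eq_faIntegral _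
  set Z : boundedFunctions Ω :=
    ∑ i, c i • (⟨X i, hbdd _ (hX i)⟩ - E (X i) • bddIndicator univ)
  have hgZ : g Z = 0 := by
    simp [Z, hgX, hg.apply_bddIndicator_univ]
  have hZω : ∀ ω, (Z : Ω → ℝ) ω = ∑ i, c i * (X i ω - E (X i)) := by
    intro ω
    simp [Z]
  simpa [hgZ, hZω] using hg Z

end Coherence

end FAP

/-- E : D → ℝ is coherent iff it is represented by a finitely
additive probability on the power set of Ω. -/
theorem stmt2 {Ω : Type*} [Nonempty Ω]
    (D : Set (Ω → ℝ)) (hbdd : ∀ X ∈ D, ∃ M : ℝ, ∀ ω, |X ω| ≤ M)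
    (E : (Ω → ℝ) → ℝ) :
    (∀ (n : ℕ), 1 ≤ n → ∀ (c : Fin n → ℝ) (X : Fin n → (Ω → ℝ)),
        (∀ i, X i ∈ D) →
        0 ≤ ⨆ ω : Ω, ∑ i, c i * (X i ω - E (X i)))
    ↔ ∃ P : Set Ω → ℝ, FAP.IsFAP P ∧ ∀ X ∈ D, E X = FAP.faIntegral P X :=
  ⟨IsCoherent.exists_isFAP hbdd, fun ⟨_, hP, hE⟩ ↦ hP.isCoherent hbdd hE⟩
end

section
/- Let $P$ be a finitely additive probability on a $\sigma$-field $\mathcal{A}$ with $P \ll P_0$ where $P_0$ is a countably additive probability on $\mathcal{A}$. Then $P$ is pure (i.e., the only countably additive measure $\Gamma$ on $\mathcal{A}$ with $0 \le \Gamma \le P$ is $\Gamma = 0$) if and only if there exists a countable partition $H_1, H_2, \dots$ of $\Omega$ with $H_n \in \mathcal{A}$ and $P(H_n) = 0$ for all $n$. -/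
/-!
With `m := ENNReal.ofReal ∘ P`, an additive content on the σ-field, the outer measure induced by
`m` (the infimum of `∑ m tᵢ` over countable measurable covers `(tᵢ)`) makes every measurable set
Carathéodory-measurable, so it restricts to a countably additive measure below `P`. If `P` is
pure this measure vanishes, hence `Ω` has countable measurable covers of arbitrarily small total
`P`-mass; their finite partial unions are sets `E` with `P E` small and `P₀ Eᶜ` small. Along a
sequence `Eₙ` with `P Eₙ → 0` and `∑ P₀ Eₙᶜ < ∞`, Borel–Cantelli makes `limsup Eₙᶜ` a `P₀`-null,
hence `P`-null, set, and together with the `P`-null sets `⋂ n ≥ r, Eₙ` it covers `Ω`.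
Conversely, a measure below `P` vanishes on every member of a `P`-null partition of `Ω`.
-/

open MeasureTheory Set

open FAP

open Filter Topology
open scoped ENNReal

section

variable {Ω : Type*} [MeasurableSpace Ω]

lemma MeasureTheory.isSetRing_measurableSet : IsSetRing {s : Set Ω | MeasurableSet s} where
  empty_mem := .empty
  union_mem _ _ := .union
  sdiff_mem _ _ := .diff

namespace MeasureTheory.AddContent

variable (m : AddContent ℝ≥0∞ {s : Set Ω | MeasurableSet s})

lemma le_caratheodory_inducedOuterMeasure :
    ‹MeasurableSpace Ω› ≤ (inducedOuterMeasure (fun s (_ : MeasurableSet s) => m s) .empty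
      (addContent_empty (m := m))).caratheodory :=
  fun s hs => OuterMeasure.ofFunction_caratheodory fun t => by
    by_cases ht : MeasurableSet t
    · rw [extend_eq _ (ht.inter hs), extend_eq _ (ht.diff hs), extend_eq _ ht,
        ← addContent_union isSetRing_measurableSet (ht.inter hs) (ht.diff hs)
          disjoint_inf_sdiff, inter_union_sdiff]
    · rw [extend_eq_top _ ht]
      exact le_top

noncomputable def sigmaMinorant : Measure Ω :=
  OuterMeasure.toMeasure _ m.le_caratheodory_inducedOuterMeasure

variable {m}

lemma sigmaMinorant_le {s : Set Ω} (hs : MeasurableSet s) : m.sigmaMinorant s ≤ m s := by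
  rw [sigmaMinorant, toMeasure_apply _ _ hs]
  exact (OuterMeasure.ofFunction_le s).trans_eq (extend_eq _ hs)

lemma exists_cover_tsum_lt_of_sigmaMinorant_univ_eq_zero (hm : m.sigmaMinorant univ = 0)
    {ε : ℝ≥0∞} (hε : ε ≠ 0) :
    ∃ t : ℕ → Set Ω, (∀ i, MeasurableSet (t i)) ∧ (⋃ i, t i) = univ ∧ ∑' i, m (t i) < ε := by
  rw [sigmaMinorant, toMeasure_apply _ _ .univ, inducedOuterMeasure,
    OuterMeasure.ofFunction_eq_iInf_mem _ _ (P := MeasurableSet) fun s hs => extend_eq_top _ hs]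
    at hm
  rw [← pos_iff_ne_zero, ← hm] at hε
  simp only [iInf_lt_iff, univ_subset_iff] at hε
  obtain ⟨t, ht, hcover, hsum⟩ := hε
  exact ⟨t, ht, hcover, by simpa only [extend_eq _ (ht _)] using hsum⟩

lemma exists_lt_of_sigmaMinorant_univ_eq_zero (hm : m.sigmaMinorant univ = 0)
    (μ : Measure Ω) [IsFiniteMeasure μ] {ε δ : ℝ≥0∞} (hε : ε ≠ 0) (hδ : δ ≠ 0) :
    ∃ E, MeasurableSet E ∧ m E < ε ∧ μ Eᶜ < δ := by
  obtain ⟨t, ht, hcover, hsum⟩ := exists_cover_tsum_lt_of_sigmaMinorant_univ_eq_zero hm hε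
  have hcompl : Tendsto (fun n => μ (accumulate t n)ᶜ) atTop (𝓝 0) := by
    have := tendsto_measure_iInter_atTop (μ := μ)
      (fun n => (isSetRing_measurableSet.accumulate_mem ht n).compl.nullMeasurableSet)
      (fun _ _ hij => compl_subset_compl.2 (monotone_accumulate hij)) ⟨0, measure_ne_top μ _⟩
    rwa [← compl_iUnion, iUnion_accumulate, hcover, compl_univ, measure_empty] at this
  obtain ⟨n, hn⟩ := (hcompl.eventually_lt_const (pos_iff_ne_zero.2 hδ)).exists
  refine ⟨accumulate t n, isSetRing_measurableSet.accumulate_mem ht n, ?_, hn⟩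
  calc m (accumulate t n) ≤ ∑ i ∈ Finset.range (n + 1), m (t i) := by
        rw [← partialSups_eq_accumulate, partialSups_eq_biUnion_range]
        exact addContent_biUnion_le isSetRing_measurableSet fun i _ => ht i
    _ ≤ ∑' i, m (t i) := ENNReal.sum_le_tsum _
    _ < ε := hsum

lemma exists_null_cover_of_forall_exists_lt {μ : Measure Ω}
    (hac : ∀ s, MeasurableSet s → μ s = 0 → m s = 0)
    (hsmall : ∀ ε δ : ℝ≥0∞, ε ≠ 0 → δ ≠ 0 → ∃ E, MeasurableSet E ∧ m E < ε ∧ μ Eᶜ < δ) :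
    ∃ N : ℕ → Set Ω, (∀ n, MeasurableSet (N n)) ∧ (⋃ n, N n) = univ ∧ ∀ n, m (N n) = 0 := by
  obtain ⟨δ, hδ_pos, hδ_sum⟩ := ENNReal.exists_pos_sum_of_countable one_ne_zero ℕ
  choose E hE hmE hμE using fun n : ℕ =>
    hsmall (n : ℝ≥0∞)⁻¹ (δ n) (by simp) (by simpa using (hδ_pos n).ne')
  set D := limsup (fun n => (E n)ᶜ) atTop
  have hD : MeasurableSet D := .measurableSet_limsup fun n => (hE n).compl
  have hmD : m D = 0 := hac D hD <| measure_limsup_atTop_eq_zero <| ne_top_of_le_ne_top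
    ENNReal.one_ne_top ((ENNReal.tsum_le_tsum fun n => (hμE n).le).trans hδ_sum.le)
  set G : ℕ → Set Ω := fun r => ⋂ n ≥ r, E n
  have hG (r : ℕ) : MeasurableSet (G r) := .iInter fun n => .iInter fun _ => hE n
  have hmG (r : ℕ) : m (G r) = 0 := by
    refine nonpos_iff_eq_zero.1 <| ge_of_tendsto ENNReal.tendsto_inv_nat_nhds_zero <|
      eventually_atTop.2 ⟨r, fun n hn => ?_⟩
    exact (addContent_mono isSetRing_measurableSet.isSetSemiring (hG r) (hE n)
      (biInter_subset_of_mem hn)).trans (hmE n).le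
  refine ⟨fun r => D ∪ G r, fun r => hD.union (hG r), eq_univ_of_forall fun ω => ?_, fun r => ?_⟩
  · by_cases hω : ω ∈ D
    · exact mem_iUnion.2 ⟨0, .inl hω⟩
    · simp only [D, mem_limsup_iff_frequently_mem, not_frequently, eventually_atTop,
        mem_compl_iff, not_not] at hω
      obtain ⟨r, hr⟩ := hω
      exact mem_iUnion.2 ⟨r, .inr (mem_iInter₂.2 hr)⟩
  · refine nonpos_iff_eq_zero.1 <|
      (addContent_union_le isSetRing_measurableSet hD (hG r)).trans ?_
    rw [hmD, hmG, add_zero]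

lemma exists_null_partition_of_null_cover {N : ℕ → Set Ω} (hN : ∀ n, MeasurableSet (N n))
    (hcover : (⋃ n, N n) = univ) (hnull : ∀ n, m (N n) = 0) :
    ∃ H : ℕ → Set Ω, (∀ n, MeasurableSet (H n)) ∧ Pairwise (Function.onFun Disjoint H) ∧
      (⋃ n, H n) = univ ∧ ∀ n, m (H n) = 0 :=
  ⟨disjointed N, .disjointed hN, disjoint_disjointed N, by rw [iUnion_disjointed, hcover],
    fun n => nonpos_iff_eq_zero.1 <| (addContent_mono isSetRing_measurableSet.isSetSemiring
      (.disjointed hN n) (hN n) (disjointed_subset N n)).trans (hnull n).le⟩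

end MeasureTheory.AddContent

namespace FAP

variable {P : Set Ω → ℝ}

noncomputable def IsFAPm.toAddContent (hP : IsFAPm P) :
    AddContent ℝ≥0∞ {s : Set Ω | MeasurableSet s} :=
  isSetRing_measurableSet.addContent_of_union (fun s => ENNReal.ofReal (P s))
    (by
      have h := hP.2.2 ∅ ∅ .empty .empty (disjoint_empty ∅)
      rw [union_empty] at h
      exact ENNReal.ofReal_eq_zero.2 (by linarith))
    fun hs ht hst => by
      rw [hP.2.2 _ _ hs ht hst, ENNReal.ofReal_add (hP.2.1 _ hs) (hP.2.1 _ ht)]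

lemma IsFAPm.toAddContent_eq_zero_iff (hP : IsFAPm P) {s : Set Ω} (hs : MeasurableSet s) :
    hP.toAddContent s = 0 ↔ P s = 0 :=
  ENNReal.ofReal_eq_zero.trans (hP.2.1 s hs).ge_iff_eq'

end FAP

end

/-- a finitely additive probability P ≪ P₀ is pure iff there is a
countable measurable partition of Ω whose members are all P-null. -/
theorem stmt3 {Ω : Type*} [MeasurableSpace Ω] (P₀ : Measure Ω) [IsProbabilityMeasure P₀]
    (P : Set Ω → ℝ) (hP : FAP.IsFAPm P) (hac : FAP.AC P P₀) :
    FAP.IsPure P ↔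
      ∃ H : ℕ → Set Ω, (∀ n, MeasurableSet (H n)) ∧
        Pairwise (Function.onFun Disjoint H) ∧ (⋃ n, H n) = univ ∧
        ∀ n, P (H n) = 0 := by
  set m := hP.toAddContent
  constructor
  · intro hpure
    have hΓ : m.sigmaMinorant univ = 0 := by
      rw [hpure _ fun A hA => m.sigmaMinorant_le hA, Measure.coe_zero, Pi.zero_apply]
    have hac' (s : Set Ω) (hs : MeasurableSet s) (h0 : P₀ s = 0) : m s = 0 :=
      (hP.toAddContent_eq_zero_iff hs).2 (hac s hs h0)
    obtain ⟨N, hN, hcover, hnull⟩ := AddContent.exists_null_cover_of_forall_exists_lt hac'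
      fun ε δ hε hδ => AddContent.exists_lt_of_sigmaMinorant_univ_eq_zero hΓ P₀ hε hδ
    obtain ⟨H, hH, hdisj, hHcover, hHnull⟩ :=
      AddContent.exists_null_partition_of_null_cover hN hcover hnull
    exact ⟨H, hH, hdisj, hHcover, fun n => (hP.toAddContent_eq_zero_iff (hH n)).1 (hHnull n)⟩
  · rintro ⟨H, hH, -, hcover, hnull⟩ Γ hΓ
    refine Measure.measure_univ_eq_zero.1 ?_
    rw [← hcover]
    refine measure_iUnion_null fun n => nonpos_iff_eq_zero.1 ?_
    simpa [hnull n] using hΓ _ (hH n)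
end

section
/- Let $P$ be a pure finitely additive probability on $\mathcal{A}$ with $P \ll P_0$. Then for every $\epsilon > 0$ there exists $A \in \mathcal{A}$ with $P(A) = 0$ and $P_0(A^c) < \epsilon$. -/
open MeasureTheory Set

/-!
For measurable `A` let `ν A` be the infimum of `∑ P (tᵢ)` over countable measurable covers
`(tᵢ)` of `A`. Carathéodory's construction makes `ν` a measure below `P`, so purity forces
`ν Ω = 0`: `Ω` has countable measurable covers of arbitrarily small total `P`-mass. A finite
subfamily of such a cover misses only a set of small `P₀`-measure, and by finite subadditivity its
union still has small `P`-mass. Intersecting such sets `Cₙ` with `P Cₙ < 1 / (n + 1)` and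
`∑ P₀ Cₙᶜ < ε` gives `A`.
-/

open scoped ENNReal

namespace FAP

variable {Ω : Type*} [MeasurableSpace Ω] {P : Set Ω → ℝ}

theorem exists_finset_measure_compl_biUnion_lt {ι : Type*} [Countable ι] {μ : Measure Ω}
    [IsFiniteMeasure μ] {t : ι → Set Ω} (ht : ∀ i, MeasurableSet (t i))
    (hcover : univ ⊆ ⋃ i, t i) {η : ℝ≥0∞} (hη : 0 < η) :
    ∃ S : Finset ι, μ (⋃ i ∈ S, t i)ᶜ < η := by
  have hanti : Antitone fun S : Finset ι => (⋃ i ∈ S, t i)ᶜ := fun _ _ h =>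
    compl_subset_compl.2 (biUnion_subset_biUnion_left h)
  have hempty : ⋂ S : Finset ι, (⋃ i ∈ S, t i)ᶜ = ∅ := by
    rw [← compl_iUnion, compl_empty_iff]
    refine eq_univ_of_univ_subset (hcover.trans (iUnion_subset fun i => ?_))
    exact subset_iUnion_of_subset {i} (subset_biUnion_of_mem (Finset.mem_singleton_self i))
  have htendsto := tendsto_measure_iInter_atTop (μ := μ)
    (fun S => (S.measurableSet_biUnion fun i _ => ht i).compl.nullMeasurableSet)
    hanti ⟨∅, measure_ne_top _ _⟩
  rw [hempty, measure_empty] at htendsto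
  exact (htendsto.eventually_lt_const hη).exists

theorem isSetRing_measurableSet : IsSetRing {s : Set Ω | MeasurableSet s} :=
  ⟨.empty, fun _ _ hs ht => hs.union ht, fun _ _ hs ht => hs.diff ht⟩

namespace IsFAPm

theorem empty (hP : IsFAPm P) : P ∅ = 0 := by
  have := hP.2.2 ∅ ∅ .empty .empty disjoint_bot_left
  simp only [union_self] at this
  linarith

theorem mono (hP : IsFAPm P) {s t : Set Ω} (hs : MeasurableSet s) (ht : MeasurableSet t)
    (hst : s ⊆ t) : P s ≤ P t := by
  have := hP.2.2 s (t \ s) hs (ht.diff hs) disjoint_sdiff_right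
  rw [union_sdiff_cancel hst] at this
  linarith [hP.2.1 (t \ s) (ht.diff hs)]

noncomputable def addContent (hP : IsFAPm P) : AddContent ℝ≥0∞ {s : Set Ω | MeasurableSet s} :=
  isSetRing_measurableSet.addContent_of_union (fun s => ENNReal.ofReal (P s))
    (by simp [hP.empty]) fun hs ht hst => by
      rw [hP.2.2 _ _ hs ht hst, ENNReal.ofReal_add (hP.2.1 _ hs) (hP.2.1 _ ht)]

theorem addContent_apply (hP : IsFAPm P) (s : Set Ω) :
    hP.addContent s = ENNReal.ofReal (P s) := rfl

/-- Extending the content by `∞` off the measurable sets makes `ofFunction` see only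
measurable covers. -/
noncomputable def outerMeasure (hP : IsFAPm P) : OuterMeasure Ω :=
  OuterMeasure.ofFunction (hP.addContent.extend isSetRing_measurableSet.isSetSemiring)
    addContent_empty

theorem outerMeasure_le (hP : IsFAPm P) {s : Set Ω} (hs : MeasurableSet s) :
    hP.outerMeasure s ≤ ENNReal.ofReal (P s) :=
  (OuterMeasure.ofFunction_le s).trans_eq (AddContent.extend_eq _ _ hs)

theorem le_outerMeasure_caratheodory (hP : IsFAPm P) :
    ‹MeasurableSpace Ω› ≤ hP.outerMeasure.caratheodory := fun _ hs =>
  AddContent.isCaratheodory_ofFunction_of_mem isSetRing_measurableSet.isSetSemiring _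
    (fun _ => AddContent.extend_eq_top _ _) hs

/-- The largest measure below `P`: the countably additive part of `P` in its Yosida–Hewitt
decomposition. -/
noncomputable def caPart (hP : IsFAPm P) : Measure Ω :=
  hP.outerMeasure.toMeasure hP.le_outerMeasure_caratheodory

theorem caPart_le (hP : IsFAPm P) {s : Set Ω} (hs : MeasurableSet s) :
    hP.caPart s ≤ ENNReal.ofReal (P s) :=
  (toMeasure_apply _ _ hs).trans_le (hP.outerMeasure_le hs)

theorem ofReal_biUnion_le_tsum (hP : IsFAPm P) {ι : Type*} {t : ι → Set Ω}
    (ht : ∀ i, MeasurableSet (t i)) (S : Finset ι) :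
    ENNReal.ofReal (P (⋃ i ∈ S, t i)) ≤ ∑' i, ENNReal.ofReal (P (t i)) :=
  (addContent_biUnion_le (m := hP.addContent) isSetRing_measurableSet fun i _ => ht i).trans
    (ENNReal.sum_le_tsum S)

end IsFAPm

theorem IsPure.caPart_eq_zero (hpure : IsPure P) (hP : IsFAPm P) : hP.caPart = 0 :=
  hpure _ fun _ => hP.caPart_le

theorem IsPure.exists_cover_tsum_lt (hpure : IsPure P) (hP : IsFAPm P) {r : ℝ≥0∞}
    (hr : 0 < r) : ∃ t : ℕ → Set Ω, (∀ i, MeasurableSet (t i)) ∧ univ ⊆ ⋃ i, t i ∧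
      ∑' i, ENNReal.ofReal (P (t i)) < r := by
  have h : hP.outerMeasure univ < r := by
    rwa [← toMeasure_apply _ hP.le_outerMeasure_caratheodory .univ, ← IsFAPm.caPart,
      hpure.caPart_eq_zero hP, Measure.coe_zero, Pi.zero_apply]
  rw [IsFAPm.outerMeasure, OuterMeasure.ofFunction_eq_iInf_mem
    (m_top := fun _ => AddContent.extend_eq_top _ _)] at h
  simp only [iInf_lt_iff] at h
  obtain ⟨t, ht, hcover, hsum⟩ := h
  refine ⟨t, ht, hcover, ?_⟩
  simpa only [AddContent.extend_eq _ _ (ht _), IsFAPm.addContent_apply] using hsum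

theorem IsPure.exists_lt_measure_compl_lt (hpure : IsPure P) (hP : IsFAPm P) (μ : Measure Ω)
    [IsFiniteMeasure μ] {r : ℝ} (hr : 0 < r) {η : ℝ≥0∞} (hη : 0 < η) :
    ∃ C, MeasurableSet C ∧ P C < r ∧ μ Cᶜ < η := by
  obtain ⟨t, ht, hcover, hsum⟩ := hpure.exists_cover_tsum_lt hP (ENNReal.ofReal_pos.2 hr)
  obtain ⟨S, hS⟩ := exists_finset_measure_compl_biUnion_lt (μ := μ) ht hcover hη
  refine ⟨⋃ i ∈ S, t i, S.measurableSet_biUnion fun i _ => ht i, ?_, hS⟩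
  exact (ENNReal.ofReal_lt_ofReal_iff hr).1 ((hP.ofReal_biUnion_le_tsum ht S).trans_lt hsum)

end FAP

open FAP

theorem stmt4_general {Ω : Type*} [MeasurableSpace Ω] (P₀ : Measure Ω) [IsProbabilityMeasure P₀]
    (P : Set Ω → ℝ) (hP : FAP.IsFAPm P) (hpure : FAP.IsPure P) :
    ∀ ε : ℝ, 0 < ε → ∃ A : Set Ω, MeasurableSet A ∧ P A = 0 ∧
      P₀ Aᶜ < ENNReal.ofReal ε := by
  intro ε hε
  obtain ⟨η, hη_pos, hη_sum⟩ :=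
    ENNReal.exists_pos_sum_of_countable (ENNReal.ofReal_pos.2 hε).ne' ℕ
  choose C hC hPC hP₀C using fun n : ℕ => hpure.exists_lt_measure_compl_lt hP P₀
    (Nat.one_div_pos_of_nat (n := n)) (ENNReal.coe_pos.2 (hη_pos n))
  have hA : MeasurableSet (⋂ n, C n) := .iInter hC
  refine ⟨⋂ n, C n, hA, ?_, ?_⟩
  · have hle (n : ℕ) : P (⋂ n, C n) ≤ 1 / (n + 1) :=
      (hP.mono hA (hC n) (iInter_subset C n)).trans (hPC n).le
    exact le_antisymm (ge_of_tendsto' tendsto_one_div_add_atTop_nhds_zero_nat hle) (hP.2.1 _ hA)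
  · calc P₀ (⋂ n, C n)ᶜ = P₀ (⋃ n, (C n)ᶜ) := by rw [compl_iInter]
      _ ≤ ∑' n, P₀ (C n)ᶜ := measure_iUnion_le _
      _ ≤ ∑' n, (η n : ℝ≥0∞) := ENNReal.tsum_le_tsum fun n => (hP₀C n).le
      _ < ENNReal.ofReal ε := hη_sum

/-- if P is pure and P ≪ P₀, for every ε > 0 there is a measurable
set A with P(A) = 0 and P₀(complement of A) < ε. -/
theorem stmt4 {Ω : Type*} [MeasurableSpace Ω] (P₀ : Measure Ω) [IsProbabilityMeasure P₀]
    (P : Set Ω → ℝ) (hP : FAP.IsFAPm P) (hac : FAP.AC P P₀) (hpure : FAP.IsPure P) :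
    ∀ ε : ℝ, 0 < ε → ∃ A : Set Ω, MeasurableSet A ∧ P A = 0 ∧
      P₀ Aᶜ < ENNReal.ofReal ε :=
  stmt4_general P₀ P hP hpure
end

section
/- Let $P$ be a finitely additive probability on $\mathcal{A}$ with $P \ll P_0$, and define $\Gamma(A) = \inf\{ P(B) + P_0(A \setminus B) : B \in \mathcal{A},\, B \subset A \}$ for $A \in \mathcal{A}$. Then $\Gamma$ is a finitely additive measure on $\mathcal{A}$ satisfying $0 \le \Gamma \le P_0$, and hence $\Gamma$ is countably additive. -/
/-!
`Γ` is the infimum `P ⊓ P₀` in the lattice of finitely additive measures. For disjoint `A` and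
`B`, gluing competitors `C ⊆ A` and `D ⊆ B` into `C ∪ D ⊆ A ∪ B` gives subadditivity, and
cutting a competitor `E ⊆ A ∪ B` into `E ∩ A` and `E ∩ B` gives superadditivity. Once
`0 ≤ Γ ≤ P₀`, the defect `Γ(⋃ H) - ∑_{n<N} Γ(H n)` is `Γ` of the tail `⋃_{n ≥ N} H n`, which is
squeezed to `0` by the σ-additivity of `P₀`.
-/

open MeasureTheory Set

open Filter Topology Function


namespace FAP

variable {Ω : Type*} [MeasurableSpace Ω]

def IsFinitelyAdditive (f : Set Ω → ℝ) : Prop :=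
  ∀ A B : Set Ω, MeasurableSet A → MeasurableSet B → Disjoint A B → f (A ∪ B) = f A + f B

theorem isFinitelyAdditive_measureReal (μ : Measure Ω) [IsFiniteMeasure μ] :
    IsFinitelyAdditive μ.real :=
  fun _ _ _ hB hAB => measureReal_union hAB hB

namespace IsFinitelyAdditive

variable {f : Set Ω → ℝ}

theorem empty (hf : IsFinitelyAdditive f) : f ∅ = 0 := by
  have h := hf ∅ ∅ .empty .empty disjoint_bot_left
  rw [union_empty] at h
  linarith

theorem biUnion_range (hf : IsFinitelyAdditive f) {H : ℕ → Set Ω}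
    (hH : ∀ n, MeasurableSet (H n)) (hd : Pairwise (Disjoint on H)) (N : ℕ) :
    f (⋃ i ∈ Finset.range N, H i) = ∑ i ∈ Finset.range N, f (H i) := by
  induction N with
  | zero => simpa using hf.empty
  | succ N ih =>
    have hdisj : Disjoint (⋃ i ∈ Finset.range N, H i) (H N) :=
      disjoint_iUnion₂_left.mpr fun i hi => hd (Finset.mem_range.mp hi).ne
    rw [Finset.range_add_one, Finset.set_biUnion_insert, union_comm,
      hf _ _ (Finset.measurableSet_biUnion _ fun i _ => hH i) (hH N) hdisj, ih,
      Finset.sum_insert Finset.notMem_range_self, add_comm]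

theorem sub_sum_range (hf : IsFinitelyAdditive f) {H : ℕ → Set Ω}
    (hH : ∀ n, MeasurableSet (H n)) (hd : Pairwise (Disjoint on H)) (N : ℕ) :
    f (⋃ n, H n) - ∑ i ∈ Finset.range N, f (H i) =
      f ((⋃ n, H n) \ ⋃ i ∈ Finset.range N, H i) := by
  have hK : MeasurableSet (⋃ i ∈ Finset.range N, H i) :=
    Finset.measurableSet_biUnion _ fun i _ => hH i
  have hKU : (⋃ i ∈ Finset.range N, H i) ⊆ ⋃ n, H n :=
    iUnion₂_subset fun i _ => subset_iUnion H i
  rw [← hf.biUnion_range hH hd, sub_eq_iff_eq_add',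
    ← hf _ _ hK ((MeasurableSet.iUnion hH).diff hK) disjoint_sdiff_right, union_sdiff_cancel hKU]

theorem hasSum_of_le_measureReal (hf : IsFinitelyAdditive f) (μ : Measure Ω)
    [IsFiniteMeasure μ] (hnn : ∀ A, MeasurableSet A → 0 ≤ f A)
    (hle : ∀ A, MeasurableSet A → f A ≤ μ.real A) {H : ℕ → Set Ω}
    (hH : ∀ n, MeasurableSet (H n)) (hd : Pairwise (Disjoint on H)) :
    HasSum (fun n => f (H n)) (f (⋃ n, H n)) := by
  have hU : MeasurableSet (⋃ n, H n) := .iUnion hH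
  have hK N : MeasurableSet (⋃ i ∈ Finset.range N, H i) :=
    Finset.measurableSet_biUnion _ fun i _ => hH i
  have hμ : HasSum (fun n => μ.real (H n)) (μ.real (⋃ n, H n)) := by
    simpa only [Measure.toSignedMeasure_apply_measurable (hH _),
      Measure.toSignedMeasure_apply_measurable hU] using μ.toSignedMeasure.m_iUnion hH hd
  have hdefect :
      Tendsto (fun N => f (⋃ n, H n) - ∑ i ∈ Finset.range N, f (H i)) atTop (𝓝 0) := by
    have hμdefect := hμ.tendsto_sum_nat.const_sub (μ.real (⋃ n, H n))
    rw [sub_self] at hμdefect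
    refine squeeze_zero (fun N => ?_) (fun N => ?_) hμdefect
    · rw [hf.sub_sum_range hH hd]
      exact hnn _ (hU.diff (hK N))
    · rw [hf.sub_sum_range hH hd, (isFinitelyAdditive_measureReal μ).sub_sum_range hH hd]
      exact hle _ (hU.diff (hK N))
  rw [hasSum_iff_tendsto_nat_of_nonneg (fun n => hnn _ (hH n))]
  simpa using hdefect.const_sub (f (⋃ n, H n))

end IsFinitelyAdditive

noncomputable def infMeasure (P : Set Ω → ℝ) (μ : Measure Ω) (A : Set Ω) : ℝ :=
  sInf {x : ℝ | ∃ B : Set Ω, MeasurableSet B ∧ B ⊆ A ∧ x = P B + (μ (A \ B)).toReal}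

section infMeasure

variable {P : Set Ω → ℝ} {μ : Measure Ω} {A B : Set Ω}

theorem infMeasure_le (hP : ∀ A, MeasurableSet A → 0 ≤ P A) {C : Set Ω}
    (hC : MeasurableSet C) (hCA : C ⊆ A) : infMeasure P μ A ≤ P C + μ.real (A \ C) := by
  refine csInf_le ⟨0, ?_⟩ ⟨C, hC, hCA, rfl⟩
  rintro x ⟨B, hB, -, rfl⟩
  exact add_nonneg (hP B hB) measureReal_nonneg

theorem le_infMeasure {c : ℝ}
    (h : ∀ C, MeasurableSet C → C ⊆ A → c ≤ P C + μ.real (A \ C)) : c ≤ infMeasure P μ A := by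
  refine le_csInf ⟨_, ∅, .empty, empty_subset A, rfl⟩ ?_
  rintro x ⟨C, hC, hCA, rfl⟩
  exact h C hC hCA

theorem infMeasure_nonneg (hP : ∀ A, MeasurableSet A → 0 ≤ P A) : 0 ≤ infMeasure P μ A :=
  le_infMeasure fun C hC _ => add_nonneg (hP C hC) measureReal_nonneg

theorem infMeasure_le_measureReal (hP : ∀ A, MeasurableSet A → 0 ≤ P A) (hP₀ : P ∅ = 0) :
    infMeasure P μ A ≤ μ.real A := by
  simpa [hP₀] using infMeasure_le (μ := μ) hP .empty (empty_subset A)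

variable [IsFiniteMeasure μ]

theorem infMeasure_union_le (hP : ∀ A, MeasurableSet A → 0 ≤ P A)
    (hPadd : IsFinitelyAdditive P) (hAB : Disjoint A B) :
    infMeasure P μ (A ∪ B) ≤ infMeasure P μ A + infMeasure P μ B := by
  have hglue : ∀ C, MeasurableSet C → C ⊆ A → ∀ D, MeasurableSet D → D ⊆ B →
      infMeasure P μ (A ∪ B) ≤ (P C + μ.real (A \ C)) + (P D + μ.real (B \ D)) := by
    intro C hC hCA D hD hDB
    have hdiff : (A ∪ B) \ (C ∪ D) ⊆ (A \ C) ∪ (B \ D) := by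
      rintro x ⟨hx | hx, hxCD⟩
      · exact .inl ⟨hx, fun h => hxCD (.inl h)⟩
      · exact .inr ⟨hx, fun h => hxCD (.inr h)⟩
    calc infMeasure P μ (A ∪ B)
        ≤ P (C ∪ D) + μ.real ((A ∪ B) \ (C ∪ D)) :=
          infMeasure_le hP (hC.union hD) (union_subset_union hCA hDB)
      _ ≤ (P C + P D) + (μ.real (A \ C) + μ.real (B \ D)) := by
          rw [hPadd C D hC hD (hAB.mono hCA hDB)]
          gcongr
          exact (measureReal_mono hdiff).trans (measureReal_union_le _ _)
      _ = _ := by ring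
  suffices infMeasure P μ (A ∪ B) - infMeasure P μ A ≤ infMeasure P μ B by linarith
  refine le_infMeasure fun D hD hDB => ?_
  suffices infMeasure P μ (A ∪ B) - (P D + μ.real (B \ D)) ≤ infMeasure P μ A by linarith
  exact le_infMeasure fun C hC hCA => by linarith [hglue C hC hCA D hD hDB]

theorem infMeasure_add_le_union (hP : ∀ A, MeasurableSet A → 0 ≤ P A)
    (hPadd : IsFinitelyAdditive P) (hA : MeasurableSet A) (hB : MeasurableSet B)
    (hAB : Disjoint A B) : infMeasure P μ A + infMeasure P μ B ≤ infMeasure P μ (A ∪ B) := by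
  refine le_infMeasure fun E hE hEAB => ?_
  have hPE : P E = P (A ∩ E) + P (B ∩ E) := by
    rw [← hPadd _ _ (hA.inter hE) (hB.inter hE)
      (hAB.mono inter_subset_left inter_subset_left), ← union_inter_distrib_right,
      inter_eq_right.mpr hEAB]
  have hμE : μ.real ((A ∪ B) \ E) = μ.real (A \ E) + μ.real (B \ E) := by
    rw [union_sdiff_distrib, measureReal_union (hAB.mono sdiff_subset sdiff_subset) (hB.diff hE)]
  have hAE := infMeasure_le (μ := μ) hP (hA.inter hE) inter_subset_left
  have hBE := infMeasure_le (μ := μ) hP (hB.inter hE) inter_subset_left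
  rw [sdiff_self_inter] at hAE hBE
  linarith

theorem isFinitelyAdditive_infMeasure (hP : ∀ A, MeasurableSet A → 0 ≤ P A)
    (hPadd : IsFinitelyAdditive P) : IsFinitelyAdditive (infMeasure P μ) :=
  fun _ _ hA hB hAB => le_antisymm (infMeasure_union_le hP hPadd hAB)
    (infMeasure_add_le_union hP hPadd hA hB hAB)

end infMeasure

end FAP

open FAP

theorem stmt5_general {Ω : Type*} [MeasurableSpace Ω] (P₀ : Measure Ω) [IsProbabilityMeasure P₀]
    (P : Set Ω → ℝ) (hP : FAP.IsFAPm P)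
    (Γ : Set Ω → ℝ)
    (hΓ : ∀ A : Set Ω, Γ A =
      sInf {x : ℝ | ∃ B : Set Ω, MeasurableSet B ∧ B ⊆ A ∧
        x = P B + (P₀ (A \ B)).toReal}) :
    (∀ A B : Set Ω, MeasurableSet A → MeasurableSet B → Disjoint A B →
      Γ (A ∪ B) = Γ A + Γ B) ∧
    (∀ A : Set Ω, MeasurableSet A → 0 ≤ Γ A ∧ Γ A ≤ (P₀ A).toReal) ∧
    (∀ H : ℕ → Set Ω, (∀ n, MeasurableSet (H n)) → Pairwise (Function.onFun Disjoint H) →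
      HasSum (fun n => Γ (H n)) (Γ (⋃ n, H n))) := by
  obtain ⟨-, hPnn, hPadd⟩ := hP
  obtain rfl : Γ = infMeasure P P₀ := funext hΓ
  have hΓadd : IsFinitelyAdditive (infMeasure P P₀) :=
    isFinitelyAdditive_infMeasure hPnn hPadd
  have hΓle : ∀ A, MeasurableSet A → infMeasure P P₀ A ≤ P₀.real A :=
    fun _ _ => infMeasure_le_measureReal hPnn (IsFinitelyAdditive.empty hPadd)
  exact ⟨hΓadd, fun A hA => ⟨infMeasure_nonneg hPnn, hΓle A hA⟩,
    fun H => hΓadd.hasSum_of_le_measureReal P₀ (fun _ _ => infMeasure_nonneg hPnn) hΓle⟩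

/-- Γ(A) = inf over measurable B ⊆ A of P(B) + P₀(A minus B) is a
finitely additive measure with 0 ≤ Γ ≤ P₀, hence countably additive. -/
theorem stmt5 {Ω : Type*} [MeasurableSpace Ω] (P₀ : Measure Ω) [IsProbabilityMeasure P₀]
    (P : Set Ω → ℝ) (hP : FAP.IsFAPm P) (hac : FAP.AC P P₀)
    (Γ : Set Ω → ℝ)
    (hΓ : ∀ A : Set Ω, Γ A =
      sInf {x : ℝ | ∃ B : Set Ω, MeasurableSet B ∧ B ⊆ A ∧
        x = P B + (P₀ (A \ B)).toReal}) :
    (∀ A B : Set Ω, MeasurableSet A → MeasurableSet B → Disjoint A B →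
      Γ (A ∪ B) = Γ A + Γ B) ∧
    (∀ A : Set Ω, MeasurableSet A → 0 ≤ Γ A ∧ Γ A ≤ (P₀ A).toReal) ∧
    (∀ H : ℕ → Set Ω, (∀ n, MeasurableSet (H n)) → Pairwise (Function.onFun Disjoint H) →
      HasSum (fun n => Γ (H n)) (Γ (⋃ n, H n))) :=
  stmt5_general P₀ P hP Γ hΓ
end

section
/- Suppose $L$ is a finite-dimensional linear subspace of bounded random variables satisfying the no-arbitrage condition: for every $X \in L$, $P_0(X > 0) > 0$ iff $P_0(X < 0) > 0$. Then there exists a constant $c^* > 0$ such that $\operatorname{ess\,sup}(X) \le c^* \operatorname{ess\,sup}(-X)$ for every $X \in L$ with $\|X\|_\infty = 1$. -/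
/-!
On `L`, the essential supremum `E X` is a sublinear functional, and no-arbitrage says that
`0 < E X` forces `0 < E (-X)`. For any such functional on a finite-dimensional space, `E` can
only decrease when translated by its lineality space `N = {X | E X ≤ 0 ∧ E (-X) ≤ 0}`, so it
suffices to compare `E` and `X ↦ E (-X)` on a complement `W` of `N`. There the second one
vanishes only at `0`, and both are convex, hence continuous; on the compact unit sphere of `W`
it is bounded below by some `δ > 0` while `E` is bounded above, and homogeneity yields
`E X ≤ c * E (-X)` for all `X`.
-/

open MeasureTheory Set

open FAP

structure IsSublinear {V : Type*} [AddCommGroup V] [Module ℝ V] (E : V → ℝ) : Prop where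
  map_add_le : ∀ x y, E (x + y) ≤ E x + E y
  map_smul_of_pos : ∀ t : ℝ, 0 < t → ∀ x, E (t • x) = t * E x

namespace IsSublinear

section Module

variable {V U : Type*} [AddCommGroup V] [Module ℝ V] [AddCommGroup U] [Module ℝ U]
  {E : V → ℝ}

theorem map_zero (hE : IsSublinear E) : E 0 = 0 := by
  have h := hE.map_smul_of_pos 2 two_pos 0
  rw [smul_zero] at h
  linarith

theorem map_smul_of_nonneg (hE : IsSublinear E) {t : ℝ} (ht : 0 ≤ t) (x : V) :
    E (t • x) = t * E x := by
  rcases ht.lt_or_eq with ht | rfl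
  · exact hE.map_smul_of_pos t ht x
  · rw [zero_smul, zero_mul, hE.map_zero]

theorem comp (hE : IsSublinear E) (f : U →ₗ[ℝ] V) : IsSublinear (E ∘ f) where
  map_add_le x y := by simpa using hE.map_add_le (f x) (f y)
  map_smul_of_pos t ht x := by simpa using hE.map_smul_of_pos t ht (f x)

theorem convexOn (hE : IsSublinear E) : ConvexOn ℝ univ E := by
  refine ⟨convex_univ, fun x _ y _ a b ha hb _ => ?_⟩
  calc E (a • x + b • y) ≤ E (a • x) + E (b • y) := hE.map_add_le _ _
    _ = a • E x + b • E y := by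
      rw [hE.map_smul_of_nonneg ha, hE.map_smul_of_nonneg hb, smul_eq_mul, smul_eq_mul]

def lineality (hE : IsSublinear E) : Submodule ℝ V where
  carrier := {x | E x ≤ 0 ∧ E (-x) ≤ 0}
  add_mem' {x y} hx hy := by
    refine ⟨(hE.map_add_le x y).trans (by linarith [hx.1, hy.1]), ?_⟩
    rw [neg_add]
    exact (hE.map_add_le _ _).trans (by linarith [hx.2, hy.2])
  zero_mem' := by simp [hE.map_zero]
  smul_mem' t x hx := by
    have hnonneg : ∀ s : ℝ, 0 ≤ s → ∀ y, E y ≤ 0 ∧ E (-y) ≤ 0 →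
        E (s • y) ≤ 0 ∧ E (-(s • y)) ≤ 0 := by
      intro s hs y hy
      rw [← smul_neg, hE.map_smul_of_nonneg hs, hE.map_smul_of_nonneg hs]
      exact ⟨mul_nonpos_of_nonneg_of_nonpos hs hy.1, mul_nonpos_of_nonneg_of_nonpos hs hy.2⟩
    rcases le_total 0 t with ht | ht
    · exact hnonneg t ht x hx
    · rw [← neg_smul_neg]
      exact hnonneg (-t) (neg_nonneg.2 ht) (-x) ⟨hx.2, by rw [neg_neg]; exact hx.1⟩

theorem map_add_le_of_mem_lineality (hE : IsSublinear E) {n : V} (hn : n ∈ hE.lineality)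
    (x : V) : E (x + n) ≤ E x :=
  (hE.map_add_le x n).trans (by linarith [hn.1])

end Module

section Normed

variable {V : Type*} [NormedAddCommGroup V] [NormedSpace ℝ V] [FiniteDimensional ℝ V]
  {f g : V → ℝ}

theorem continuous (hf : IsSublinear f) : Continuous f :=
  hf.convexOn.locallyLipschitz.continuous

theorem exists_le_mul_of_pos_of_normedSpace (hf : IsSublinear f) (hg : IsSublinear g)
    (hpos : ∀ x ≠ 0, 0 < g x) : ∃ c > 0, ∀ x, f x ≤ c * g x := by
  have hS : IsCompact (Metric.sphere (0 : V) 1) := isCompact_sphere 0 1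
  obtain ⟨M, hM⟩ := hS.exists_bound_of_continuousOn hf.continuous.continuousOn
  obtain ⟨δ, hδ, hδg⟩ : ∃ δ > 0, ∀ u ∈ Metric.sphere (0 : V) 1, δ ≤ g u := by
    rcases (Metric.sphere (0 : V) 1).eq_empty_or_nonempty with h | h
    · exact ⟨1, one_pos, by simp [h]⟩
    · obtain ⟨u₀, hu₀, hmin⟩ := hS.exists_isMinOn h hg.continuous.continuousOn
      exact ⟨g u₀, hpos u₀ (ne_zero_of_mem_unit_sphere ⟨u₀, hu₀⟩), fun u hu => hmin hu⟩
  refine ⟨max M 1 / δ, by positivity, fun x => ?_⟩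
  rcases eq_or_ne x 0 with rfl | hx
  · simp [hf.map_zero, hg.map_zero]
  have hxpos : 0 < ‖x‖ := norm_pos_iff.2 hx
  set u := ‖x‖⁻¹ • x
  have hu : u ∈ Metric.sphere (0 : V) 1 := by
    simp [u, norm_smul, hxpos.ne']
  have hfu : f u ≤ max M 1 / δ * g u :=
    calc f u ≤ max M 1 := (le_abs_self _).trans ((hM u hu).trans (le_max_left _ _))
      _ = max M 1 / δ * δ := by field_simp
      _ ≤ max M 1 / δ * g u := by gcongr; exact hδg u hu
  have hxu : x = ‖x‖ • u := by simp [u, smul_smul, hxpos.ne']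
  rw [hxu, hf.map_smul_of_pos _ hxpos, hg.map_smul_of_pos _ hxpos, mul_left_comm]
  exact mul_le_mul_of_nonneg_left hfu hxpos.le

end Normed

section FiniteDimensional

variable {V : Type*} [AddCommGroup V] [Module ℝ V] [FiniteDimensional ℝ V] {E f g : V → ℝ}

theorem exists_le_mul_of_pos (hf : IsSublinear f) (hg : IsSublinear g)
    (hpos : ∀ x ≠ 0, 0 < g x) : ∃ c > 0, ∀ x, f x ≤ c * g x := by
  let e := (Module.finBasis ℝ V).equivFun.symm
  obtain ⟨c, hc, h⟩ := exists_le_mul_of_pos_of_normedSpace (hf.comp e.toLinearMap)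
    (hg.comp e.toLinearMap) fun y hy => hpos _ (by simpa using hy)
  exact ⟨c, hc, fun x => by simpa using h (e.symm x)⟩

theorem exists_le_mul_neg (hE : IsSublinear E) (hna : ∀ x, 0 < E x → 0 < E (-x)) :
    ∃ c > 0, ∀ x, E x ≤ c * E (-x) := by
  obtain ⟨W, hW⟩ := Submodule.exists_isCompl hE.lineality
  have hpos : ∀ w : W, w ≠ 0 → 0 < E (-(w : V)) := by
    intro w hw
    by_contra! h
    have hN : (w : V) ∈ hE.lineality := ⟨not_lt.1 fun h' => (hna _ h').not_ge h, h⟩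
    exact hw (Subtype.ext ((Submodule.disjoint_def.1 hW.disjoint) _ hN w.2))
  obtain ⟨c, hc, hcW⟩ := exists_le_mul_of_pos (hE.comp W.subtype) (hE.comp (-W.subtype)) hpos
  refine ⟨c, hc, fun x => ?_⟩
  obtain ⟨n, hn, w, hw, rfl⟩ := Submodule.mem_sup.1 (hW.sup_eq_top ▸ Submodule.mem_top :
    x ∈ hE.lineality ⊔ W)
  calc E (n + w) ≤ E w := by rw [add_comm]; exact hE.map_add_le_of_mem_lineality hn w
    _ ≤ c * E (-w) := hcW ⟨w, hw⟩
    _ ≤ c * E (-(n + w)) := by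
      gcongr
      have h := hE.map_add_le_of_mem_lineality hn (-(n + w))
      rwa [show -(n + w) + n = -w by abel] at h

end FiniteDimensional

end IsSublinear

section EssSup

open Filter

variable {Ω : Type*} [MeasurableSpace Ω] {μ : Measure Ω} [NeZero μ] {f g : Ω → ℝ}

theorem essSup_add_le_of_isBoundedUnder (hf : IsBoundedUnder (· ≤ ·) (ae μ) fun ω => |f ω|)
    (hg : IsBoundedUnder (· ≤ ·) (ae μ) fun ω => |g ω|) :
    essSup (f + g) μ ≤ essSup f μ + essSup g μ := by
  rw [isBoundedUnder_le_abs] at hf hg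
  exact limsup_add_le hf.2 hf.1 hg.2.isCoboundedUnder_le hg.1

theorem essSup_smul_of_pos (hf : IsBoundedUnder (· ≤ ·) (ae μ) fun ω => |f ω|) {t : ℝ}
    (ht : 0 < t) : essSup (t • f) μ = t * essSup f μ := by
  rw [isBoundedUnder_le_abs] at hf
  let φ := OrderIso.mulLeft₀ t ht
  have hφf : IsBoundedUnder (· ≥ ·) (ae μ) (φ ∘ f) := hf.2.comp fun _ _ h => φ.monotone h
  exact (φ.essSup_apply f μ hf.1 hf.2.isCoboundedUnder_le (hf.1.comp fun _ _ h => φ.monotone h)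
    hφf.isCoboundedUnder_le).symm

theorem essSup_pos_iff (hf : IsBoundedUnder (· ≤ ·) (ae μ) fun ω => |f ω|) :
    0 < essSup f μ ↔ 0 < μ {ω | 0 < f ω} := by
  rw [isBoundedUnder_le_abs] at hf
  constructor
  · intro h
    by_contra! h0
    refine h.not_ge (essSup_le_of_ae_le 0 ?_ hf.2.isCoboundedUnder_le)
    simpa [EventuallyLE, ae_iff] using h0
  · intro h
    by_contra! h0
    exact h.ne' (measure_mono_null (fun ω hω => h0.trans_lt hω) (meas_essSup_lt hf.1))

theorem isSublinear_essSup (V : Submodule ℝ (Ω → ℝ))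
    (hV : ∀ X ∈ V, IsBoundedUnder (· ≤ ·) (ae μ) fun ω => |X ω|) :
    IsSublinear fun X : V => essSup (X : Ω → ℝ) μ where
  map_add_le X Y := essSup_add_le_of_isBoundedUnder (hV X X.2) (hV Y Y.2)
  map_smul_of_pos _ ht X := essSup_smul_of_pos (hV X X.2) ht

end EssSup

/-- if L is finite-dimensional and satisfies no-arbitrage, then
there is c* > 0 with ess sup(X) ≤ c* ess sup(-X) for every X ∈ L of unit norm. -/
theorem stmt12 {Ω : Type*} [MeasurableSpace Ω] (P₀ : Measure Ω) [IsProbabilityMeasure P₀]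
    (L : Submodule ℝ (Ω → ℝ)) (hfin : FiniteDimensional ℝ L)
    (hL : ∀ X ∈ L, Measurable X ∧ ∃ M : ℝ, ∀ ω, |X ω| ≤ M)
    (hna : ∀ X ∈ L, (0 < P₀ {ω | 0 < X ω} ↔ 0 < P₀ {ω | X ω < 0})) :
    ∃ cstar : ℝ, 0 < cstar ∧ ∀ X ∈ L,
      max (FAP.essSupR P₀ X) (FAP.essSupR P₀ (fun ω => -X ω)) = 1 →
      FAP.essSupR P₀ X ≤ cstar * FAP.essSupR P₀ (fun ω => -X ω) := by
  have hbdd : ∀ X ∈ L, Filter.IsBoundedUnder (· ≤ ·) (ae P₀) fun ω => |X ω| := fun X hX =>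
    let ⟨M, hM⟩ := (hL X hX).2
    Filter.isBoundedUnder_of ⟨M, hM⟩
  have hnaE : ∀ X : L, 0 < essSup (X : Ω → ℝ) P₀ → 0 < essSup ((-X : L) : Ω → ℝ) P₀ := by
    intro X hX
    rw [essSup_pos_iff (hbdd X X.2)] at hX
    rw [essSup_pos_iff (hbdd _ (-X).2)]
    simpa using (hna X X.2).1 hX
  obtain ⟨c, hc, hcE⟩ := (isSublinear_essSup L hbdd).exists_le_mul_neg hnaE
  refine ⟨c, hc, fun X hX _ => ?_⟩
  simp only [essSupR, ← essSup_eq_sInf]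
  exact hcE ⟨X, hX⟩
end

section
/- Suppose $P_0$ is atomic with infinitely many atoms $A_1, A_2, \dots$ forming a partition of $\Omega$, and suppose $\lim_n X|A_n = 0$ for every $X \in L$ (where $X|A_n$ is the a.s.-constant value of $X$ on $A_n$). If $P_1$ is a pure finitely additive probability with $P_1 \ll P_0$, then $P_1(A_n) = 0$ for all $n$ and $E_{P_1}(X) = 0$ for all $X \in L$. -/
open MeasureTheory Set

open FAP

/-!
If `P₁(Aₙ) = c > 0`, then `(c / P₀(Aₙ)) • P₀|Aₙ` is a countably additive measure below `P₁`
(a measurable set meets the atom either in a `P₀`-null set or in almost all of it, and `P₁ ≪ P₀`),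
contradicting purity. So `P₁` vanishes on finite unions of atoms. If `X ∈ L` has atom values
`rₙ → 0` and `t > 0`, then off a `P₀`-null set, `{X > t}` is contained in the finitely many atoms
with `rₙ ≥ t`; hence `P₁(X > t) = 0`, and likewise `P₁(X ≤ t) = 0` for `t < 0`. Both layer-cake
integrands then vanish.
-/

namespace FAP

variable {Ω : Type*} {P : Set Ω → ℝ}

theorem faIntegral_eq_zero_of_forall {X : Ω → ℝ} (hpos : ∀ t > 0, P {ω | t < X ω} = 0)
    (hneg : ∀ t < 0, P {ω | t < X ω} = 1) : faIntegral P X = 0 := by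
  have hIoi : ∫ t in Ioi (0 : ℝ), P {ω | t < X ω} = 0 := by
    rw [setIntegral_congr_fun measurableSet_Ioi (g := fun _ ↦ 0) fun t ht ↦ hpos t ht,
      integral_zero]
  have hIio : ∫ t in Iio (0 : ℝ), (1 - P {ω | t < X ω}) = 0 := by
    rw [setIntegral_congr_fun measurableSet_Iio (g := fun _ ↦ 0) fun t ht ↦ by simp [hneg t ht],
      integral_zero]
  rw [faIntegral, hIoi, hIio, sub_zero]

variable [MeasurableSpace Ω]

namespace IsFAPm

variable (hP : IsFAPm P)
include hP

theorem apply_empty : P ∅ = 0 := by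
  have h := hP.2.2 ∅ ∅ .empty .empty (disjoint_empty ∅)
  rw [union_empty] at h
  linarith

theorem mono_s14 {C D : Set Ω} (hC : MeasurableSet C) (hD : MeasurableSet D) (hCD : C ⊆ D) :
    P C ≤ P D := by
  have h := hP.2.2 C (D \ C) hC (hD.diff hC) disjoint_sdiff_self_right
  rw [union_sdiff_cancel hCD] at h
  linarith [hP.2.1 _ (hD.diff hC)]

theorem apply_union_le {C D : Set Ω} (hC : MeasurableSet C) (hD : MeasurableSet D) :
    P (C ∪ D) ≤ P C + P D := by
  have h := hP.2.2 C (D \ C) hC (hD.diff hC) disjoint_sdiff_self_right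
  rw [union_sdiff_self] at h
  linarith [hP.mono_s14 (hD.diff hC) hD sdiff_subset]

theorem apply_compl {C : Set Ω} (hC : MeasurableSet C) : P Cᶜ = 1 - P C := by
  have h := hP.2.2 C Cᶜ hC hC.compl disjoint_compl_right
  rw [union_compl_self, hP.1] at h
  linarith

theorem apply_eq_zero_of_subset_union {C D E : Set Ω} (hC : MeasurableSet C)
    (hD : MeasurableSet D) (hE : MeasurableSet E) (hCDE : C ⊆ D ∪ E) (hD0 : P D = 0)
    (hE0 : P E = 0) : P C = 0 := by
  have h := (hP.mono_s14 hC (hD.union hE) hCDE).trans (hP.apply_union_le hD hE)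
  linarith [hP.2.1 C hC]

theorem apply_biUnion_finset_eq_zero {ι : Type*} (s : Finset ι) {A : ι → Set Ω}
    (hA : ∀ i, MeasurableSet (A i)) (hA0 : ∀ i, P (A i) = 0) : P (⋃ i ∈ s, A i) = 0 := by
  classical
  induction s using Finset.induction_on with
  | empty => simpa using hP.apply_empty
  | insert i s _ ih =>
    rw [Finset.set_biUnion_insert]
    exact hP.apply_eq_zero_of_subset_union ((hA i).union (s.measurableSet_biUnion fun j _ ↦ hA j))
      (hA i) (s.measurableSet_biUnion fun j _ ↦ hA j) subset_rfl (hA0 i) ih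

end IsFAPm

variable {P₀ : Measure Ω}

theorem AC.le_of_measure_diff_eq_zero (hP : IsFAPm P) (hac : AC P P₀) {C D : Set Ω}
    (hC : MeasurableSet C) (hD : MeasurableSet D) (hCD : P₀ (C \ D) = 0) : P C ≤ P D := by
  have h := (hP.mono_s14 hC (hD.union (hC.diff hD)) (by simp)).trans
    (hP.apply_union_le hD (hC.diff hD))
  linarith [hac _ (hC.diff hD) hCD]

theorem IsPure.apply_eq_zero_of_atom [IsFiniteMeasure P₀] (hP : IsFAPm P) (hpure : IsPure P)
    (hac : AC P P₀) {A : Set Ω} (hA : MeasurableSet A) (hA0 : P₀ A ≠ 0)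
    (hatom : ∀ B, MeasurableSet B → P₀ (B ∩ A) = 0 ∨ P₀ (B ∩ A) = P₀ A) : P A = 0 := by
  set Γ : Measure Ω := (ENNReal.ofReal (P A) / P₀ A) • P₀.restrict A
  have hΓ : ∀ B, MeasurableSet B → Γ B = ENNReal.ofReal (P A) / P₀ A * P₀ (B ∩ A) :=
    fun B hB ↦ by rw [Measure.smul_apply, Measure.restrict_apply hB, smul_eq_mul]
  have hΓA : Γ A = ENNReal.ofReal (P A) := by
    rw [hΓ A hA, inter_self, ENNReal.div_mul_cancel hA0 (measure_ne_top _ _)]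
  have hΓle : ∀ B, MeasurableSet B → Γ B ≤ ENNReal.ofReal (P B) := by
    intro B hB
    rcases hatom B hB with hnull | hfull
    · simp [hΓ B hB, hnull]
    · have hAB : P₀ (A \ B) = 0 := by
        rw [← sdiff_inter_self_eq_sdiff, measure_sdiff inter_subset_right
          (hB.inter hA).nullMeasurableSet (measure_ne_top _ _), hfull, tsub_self]
      rw [hΓ B hB, hfull, ENNReal.div_mul_cancel hA0 (measure_ne_top _ _)]
      exact ENNReal.ofReal_le_ofReal (hac.le_of_measure_diff_eq_zero hP hA hB hAB)
  rw [hpure Γ hΓle, Measure.coe_zero, Pi.zero_apply, eq_comm, ENNReal.ofReal_eq_zero] at hΓA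
  exact le_antisymm hΓA (hP.2.1 A hA)

section AtomValues

variable (hP : IsFAPm P) (hac : AC P P₀) {A : ℕ → Set Ω} (hAm : ∀ n, MeasurableSet (A n))
  (hAcover : ⋃ n, A n = univ) (hPA : ∀ n, P (A n) = 0) {X : Ω → ℝ} (hXm : Measurable X)
  {r : ℕ → ℝ} (hXr : ∀ n, P₀ {ω | ω ∈ A n ∧ X ω ≠ r n} = 0)
include hP hac hAm hAcover hPA hXm hXr

theorem apply_eq_zero_of_eventually_ne {C : Set Ω} (hC : MeasurableSet C)
    (hCr : ∀ᶠ n in Filter.atTop, ∀ ω ∈ C, X ω ≠ r n) : P C = 0 := by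
  obtain ⟨N, hN⟩ := Filter.eventually_atTop.mp hCr
  set bad := ⋃ n, {ω | ω ∈ A n ∧ X ω ≠ r n}
  have hbad : MeasurableSet bad :=
    .iUnion fun n ↦ (hAm n).inter (hXm (measurableSet_singleton (r n))).compl
  have hsub : C ⊆ (⋃ i ∈ Finset.range N, A i) ∪ bad := by
    intro ω hω
    obtain ⟨n, hn⟩ := mem_iUnion.mp (hAcover.symm ▸ mem_univ ω : ω ∈ ⋃ n, A n)
    rcases lt_or_ge n N with hlt | hge
    · exact Or.inl (mem_biUnion (Finset.mem_range.mpr hlt) hn)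
    · exact Or.inr (mem_iUnion.mpr ⟨n, hn, hN n hge ω hω⟩)
  exact hP.apply_eq_zero_of_subset_union hC
    (Finset.measurableSet_biUnion _ fun i _ ↦ hAm i) hbad hsub
    (hP.apply_biUnion_finset_eq_zero _ hAm hPA) (hac _ hbad (measure_iUnion_null hXr))

theorem faIntegral_eq_zero_of_tendsto_atom_values (hr : Filter.Tendsto r Filter.atTop (nhds 0)) :
    faIntegral P X = 0 := by
  refine faIntegral_eq_zero_of_forall (fun t ht ↦ ?_) (fun t ht ↦ ?_)
  · refine apply_eq_zero_of_eventually_ne hP hac hAm hAcover hPA hXm hXr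
      (measurableSet_lt measurable_const hXm) ?_
    filter_upwards [hr.eventually (gt_mem_nhds ht)] with n hn ω hω
    exact (hn.trans hω).ne'
  · have hcompl : {ω | t < X ω} = {ω | X ω ≤ t}ᶜ := by ext; simp
    have hle := measurableSet_le hXm (measurable_const (a := t))
    rw [hcompl, hP.apply_compl hle, apply_eq_zero_of_eventually_ne hP hac hAm hAcover hPA hXm hXr
      hle ?_, sub_zero]
    filter_upwards [hr.eventually (lt_mem_nhds ht)] with n hn ω hω
    exact (lt_of_le_of_lt hω hn).ne

end AtomValues

end FAP

theorem stmt14_general {Ω : Type*} [MeasurableSpace Ω] (P₀ : Measure Ω) [IsProbabilityMeasure P₀]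
    (A : ℕ → Set Ω) (hAm : ∀ n, MeasurableSet (A n))
    (hAcover : (⋃ n, A n) = univ)
    (hatom : ∀ n, 0 < P₀ (A n) ∧
      ∀ B : Set Ω, MeasurableSet B → P₀ (B ∩ A n) = 0 ∨ P₀ (B ∩ A n) = P₀ (A n))
    (L : Submodule ℝ (Ω → ℝ))
    (hL : ∀ X ∈ L, Measurable X ∧ ∃ M : ℝ, ∀ ω, |X ω| ≤ M)
    (hconst : ∀ X ∈ L, ∃ r : ℕ → ℝ,
      (∀ n, P₀ {ω | ω ∈ A n ∧ X ω ≠ r n} = 0) ∧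
      Filter.Tendsto r Filter.atTop (nhds 0))
    (P₁ : Set Ω → ℝ) (hP₁ : FAP.IsFAPm P₁) (hpure : FAP.IsPure P₁)
    (hac : FAP.AC P₁ P₀) :
    (∀ n, P₁ (A n) = 0) ∧ ∀ X ∈ L, FAP.faIntegral P₁ X = 0 := by
  have hPA : ∀ n, P₁ (A n) = 0 := fun n ↦
    hpure.apply_eq_zero_of_atom hP₁ hac (hAm n) (hatom n).1.ne' (hatom n).2
  refine ⟨hPA, fun X hX ↦ ?_⟩
  obtain ⟨r, hXr, hr⟩ := hconst X hX
  exact faIntegral_eq_zero_of_tendsto_atom_values hP₁ hac hAm hAcover hPA (hL X hX).1 hXr hr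

/-- if P₀ is atomic with atoms (A n) and every X ∈ L has a.s.-constant
values on the atoms tending to 0, then every pure finitely additive P₁ ≪ P₀ gives
each atom mass 0 and integrates every X ∈ L to 0. -/
theorem stmt14 {Ω : Type*} [MeasurableSpace Ω] (P₀ : Measure Ω) [IsProbabilityMeasure P₀]
    (A : ℕ → Set Ω) (hAm : ∀ n, MeasurableSet (A n))
    (hAdisj : Pairwise (Function.onFun Disjoint A)) (hAcover : (⋃ n, A n) = univ)
    (hatom : ∀ n, 0 < P₀ (A n) ∧
      ∀ B : Set Ω, MeasurableSet B → P₀ (B ∩ A n) = 0 ∨ P₀ (B ∩ A n) = P₀ (A n))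
    (L : Submodule ℝ (Ω → ℝ))
    (hL : ∀ X ∈ L, Measurable X ∧ ∃ M : ℝ, ∀ ω, |X ω| ≤ M)
    (hconst : ∀ X ∈ L, ∃ r : ℕ → ℝ,
      (∀ n, P₀ {ω | ω ∈ A n ∧ X ω ≠ r n} = 0) ∧
      Filter.Tendsto r Filter.atTop (nhds 0))
    (P₁ : Set Ω → ℝ) (hP₁ : FAP.IsFAPm P₁) (hpure : FAP.IsPure P₁)
    (hac : FAP.AC P₁ P₀) :
    (∀ n, P₁ (A n) = 0) ∧ ∀ X ∈ L, FAP.faIntegral P₁ X = 0 :=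
  stmt14_general P₀ A hAm hAcover hatom L hL hconst P₁ hP₁ hpure hac
end

section
/- Let $\Omega = \{1, 2, \dots\}$, $P_0\{\omega\} = 2^{-\omega}$, and $L$ the linear span of $X(\omega) = 1/\omega$. Then $\operatorname{ess\,sup}(Y) \ge 0$ for all $Y \in L$ (so an absolutely continuous martingale finitely additive probability exists), but the no-arbitrage condition fails: $P_0(X > 0) > 0$ while $P_0(X < 0) = 0$. -/
open MeasureTheory Set

open FAP

/-!
Every singleton has positive `P₀`-mass, so the only `P₀`-null set is `∅`. Hence
`P₀(Y > a) = 0` forces `Y ≤ a` everywhere, and since every `Y = c X` tends to `0` this gives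
`ess sup Y ≥ 0`; for the same reason `P₀(X < 0) = 0` although `X > 0`. The martingale
probability is the `{0,1}`-valued finitely additive probability of a free ultrafilter: it
charges no finite set, so it integrates every function tending to `0` along the cofinite
filter to `0`, and it is absolutely continuous because there are no nonempty null sets.
-/

open Filter Topology

namespace FAP

variable {Ω : Type*}

lemma eq_empty_of_measure_eq_zero [MeasurableSpace Ω] {μ : Measure Ω}
    (hμ : ∀ ω, μ {ω} ≠ 0) {A : Set Ω} (hA : μ A = 0) : A = ∅ :=
  eq_empty_of_forall_notMem fun ω hω => hμ ω (measure_mono_null (singleton_subset_iff.2 hω) hA)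

lemma essSupR_nonneg_of_tendsto [MeasurableSpace Ω] [Infinite Ω] {μ : Measure Ω}
    (hμ : ∀ ω, μ {ω} ≠ 0) {Y : Ω → ℝ} (hY : Tendsto Y cofinite (𝓝 0)) :
    0 ≤ essSupR μ Y := by
  refine Real.sInf_nonneg fun a ha => ?_
  have hle : ∀ ω, Y ω ≤ a := fun ω => not_lt.1 fun hω =>
    (eq_empty_of_measure_eq_zero hμ ha).subset hω
  exact le_of_tendsto' hY hle

noncomputable def ultrafilterProb (F : Ultrafilter Ω) (A : Set Ω) : ℝ :=
  open Classical in if A ∈ F then 1 else 0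

lemma isFAPm_ultrafilterProb [MeasurableSpace Ω] (F : Ultrafilter Ω) :
    IsFAPm (ultrafilterProb F) := by
  refine ⟨if_pos univ_mem, fun A _ => by unfold ultrafilterProb; split <;> norm_num,
    fun A B _ _ hAB => ?_⟩
  have hAB' : ¬(A ∈ F ∧ B ∈ F) := fun h =>
    F.empty_notMem (disjoint_iff_inter_eq_empty.1 hAB ▸ inter_mem h.1 h.2)
  unfold ultrafilterProb
  by_cases hA : A ∈ F <;> by_cases hB : B ∈ F <;> simp_all [Ultrafilter.union_mem_iff]

lemma ac_ultrafilterProb [MeasurableSpace Ω] {μ : Measure Ω} (hμ : ∀ ω, μ {ω} ≠ 0)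
    (F : Ultrafilter Ω) : AC (ultrafilterProb F) μ := fun A _ hA => by
  rw [eq_empty_of_measure_eq_zero hμ hA]
  exact if_neg F.empty_notMem

lemma faIntegral_ultrafilterProb_eq_zero (F : Ultrafilter Ω) {Y : Ω → ℝ}
    (hY : Tendsto Y F (𝓝 0)) : faIntegral (ultrafilterProb F) Y = 0 := by
  have hpos : EqOn (fun t => ultrafilterProb F {ω | t < Y ω}) 0 (Ioi 0) :=
    fun t (ht : 0 < t) => if_neg fun h => F.empty_notMem <| by
      filter_upwards [h, hY (Iio_mem_nhds ht)] with ω h₁ h₂ using lt_asymm h₁ h₂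
  have hneg : EqOn (fun t => 1 - ultrafilterProb F {ω | t < Y ω}) 0 (Iio 0) :=
    fun t (ht : t < 0) => by
      have hmem : {ω | t < Y ω} ∈ F := hY (Ioi_mem_nhds ht)
      simp only [ultrafilterProb, if_pos hmem, sub_self, Pi.zero_apply]
  rw [faIntegral, setIntegral_congr_fun measurableSet_Ioi hpos,
    setIntegral_congr_fun measurableSet_Iio hneg]
  simp

end FAP

lemma tendsto_one_div_pnat_cofinite :
    Tendsto (fun ω : ℕ+ => (1 : ℝ) / ((ω : ℕ) : ℝ)) cofinite (𝓝 0) :=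
  tendsto_one_div_atTop_nhds_zero_nat.comp
    (Nat.cofinite_eq_atTop ▸ PNat.coe_injective.tendsto_cofinite)

theorem stmt15_general [MeasurableSpace ℕ+]
    (P₀ : Measure ℕ+)
    (hP₀ : ∀ ω : ℕ+, P₀ {ω} = (1 / 2 : ENNReal) ^ (ω : ℕ))
    (X : ℕ+ → ℝ) (hX : X = fun ω : ℕ+ => (1 : ℝ) / ((ω : ℕ) : ℝ))
    (L : Submodule ℝ (ℕ+ → ℝ)) (hLdef : L = Submodule.span ℝ {X}) :
    (∀ Y ∈ L, 0 ≤ FAP.essSupR P₀ Y) ∧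
    (∃ P : Set ℕ+ → ℝ, FAP.IsFAPm P ∧ FAP.AC P P₀ ∧
      ∀ Y ∈ L, FAP.faIntegral P Y = 0) ∧
    0 < P₀ {ω | 0 < X ω} ∧ P₀ {ω | X ω < 0} = 0 := by
  have hμ : ∀ ω, P₀ {ω} ≠ 0 := fun ω => by simp [hP₀]
  have hX_pos : ∀ ω, 0 < X ω := fun ω => by rw [hX]; positivity
  have hL : ∀ Y ∈ L, Tendsto Y cofinite (𝓝 0) := fun Y hY => by
    rw [hLdef, Submodule.mem_span_singleton] at hY
    obtain ⟨c, rfl⟩ := hY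
    rw [← smul_zero c]
    exact (hX ▸ tendsto_one_div_pnat_cofinite).const_smul c
  refine ⟨fun Y hY => essSupR_nonneg_of_tendsto hμ (hL Y hY),
    ⟨ultrafilterProb (hyperfilter ℕ+), isFAPm_ultrafilterProb _, ac_ultrafilterProb hμ _,
      fun Y hY => faIntegral_ultrafilterProb_eq_zero _
        ((hL Y hY).mono_left hyperfilter_le_cofinite)⟩,
    pos_iff_ne_zero.2 ?_, ?_⟩
  · exact fun h => (eq_empty_of_measure_eq_zero hμ h).subset (hX_pos 1)
  · simp [(hX_pos _).not_gt]

/-- for Ω = {1,2,...}, P₀{ω} = 2^{-ω} and L the span of X(ω) = 1/ω,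
one has ess sup(Y) ≥ 0 for all Y ∈ L (so an absolutely continuous martingale
finitely additive probability exists), but no-arbitrage fails:
P₀(X > 0) > 0 while P₀(X < 0) = 0. -/
theorem stmt15 [MeasurableSpace ℕ+] (hall : ∀ A : Set ℕ+, MeasurableSet A)
    (P₀ : Measure ℕ+) [IsProbabilityMeasure P₀]
    (hP₀ : ∀ ω : ℕ+, P₀ {ω} = (1 / 2 : ENNReal) ^ (ω : ℕ))
    (X : ℕ+ → ℝ) (hX : X = fun ω : ℕ+ => (1 : ℝ) / ((ω : ℕ) : ℝ))
    (L : Submodule ℝ (ℕ+ → ℝ)) (hLdef : L = Submodule.span ℝ {X}) :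
    (∀ Y ∈ L, 0 ≤ FAP.essSupR P₀ Y) ∧
    (∃ P : Set ℕ+ → ℝ, FAP.IsFAPm P ∧ FAP.AC P P₀ ∧
      ∀ Y ∈ L, FAP.faIntegral P Y = 0) ∧
    0 < P₀ {ω | 0 < X ω} ∧ P₀ {ω | X ω < 0} = 0 :=
  stmt15_general P₀ hP₀ X hX L hLdef
end

section
/- Let $(Y_n)_{n \ge 1}$ be $\{-1,1\}$-valued random variables, $\mathcal{A} = \sigma(Y_1, Y_2, \dots)$, $S_n = \sum_{i=1}^n Y_i$, $\mathcal{F}_n = \sigma(S_0, \dots, S_n)$, and $L = \operatorname{Span}\{ I_A (S_t - S_s) : s < t, A \in \mathcal{F}_s \}$. If $P$ is a finitely additive probability on $\mathcal{A}$ with $E_P(X) = 0$ for all $X \in L$, then under $P$ the variables $(Y_n)$ are i.i.d. with $P(Y_1 = 1) = 1/2$; in particular $P$ agrees on $\bigcup_n \mathcal{F}_n$ with the fair coin-tossing measure $Q_0$. -/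
open MeasureTheory Set

open FAP

lemma faInt_sub_indicator {Ω : Type*} [MeasurableSpace Ω] (P : Set Ω → ℝ)
    (hP : IsFAPm P) (B C : Set Ω) (hB : MeasurableSet B) (hC : MeasurableSet C)
    (hd : Disjoint B C) :
    faIntegral P (fun ω => B.indicator (fun _ => (1 : ℝ)) ω - C.indicator (fun _ => (1 : ℝ)) ω)
      = P B - P C := by
  obtain ⟨h1, hpos, hadd⟩ := hP
  have hempty : P ∅ = 0 := by
    have h := hadd ∅ ∅ MeasurableSet.empty MeasurableSet.empty disjoint_bot_left
    simp only [Set.union_empty] at h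
    linarith
  have hcompl : P Cᶜ = 1 - P C := by
    have h := hadd C Cᶜ hC hC.compl disjoint_compl_right
    rw [Set.union_compl_self, h1] at h
    linarith
  set g : Ω → ℝ := fun ω => B.indicator (fun _ => (1 : ℝ)) ω - C.indicator (fun _ => (1 : ℝ)) ω
    with hgdef
  have hgB : ∀ ω ∈ B, g ω = 1 := by
    intro ω h
    simp [hgdef, Set.indicator_apply, h, Set.disjoint_left.mp hd h]
  have hgC : ∀ ω ∈ C, g ω = -1 := by
    intro ω h
    simp [hgdef, Set.indicator_apply, h, Set.disjoint_right.mp hd h]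
  have hg0 : ∀ ω, ω ∉ B → ω ∉ C → g ω = 0 := by
    intro ω hb hc
    simp [hgdef, Set.indicator_apply, hb, hc]
  have hset1 : ∀ t : ℝ, 0 < t → {ω | t < g ω} = if t < 1 then B else ∅ := by
    intro t ht
    ext ω
    by_cases hb : ω ∈ B
    · have hv := hgB ω hb
      split_ifs with h <;> simp [Set.mem_setOf_eq, hv, hb, h]
    · by_cases hc : ω ∈ C
      · have hv := hgC ω hc
        split_ifs with h <;> simp [Set.mem_setOf_eq, hv, hb] <;> linarith
      · have hv := hg0 ω hb hc
        split_ifs with h <;> simp [Set.mem_setOf_eq, hv, hb] <;> linarith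
  have hset2 : ∀ t : ℝ, t < 0 → {ω | t < g ω} = if -1 ≤ t then Cᶜ else univ := by
    intro t ht
    ext ω
    by_cases hc : ω ∈ C
    · have hv := hgC ω hc
      split_ifs with h <;> simp [Set.mem_setOf_eq, hv, hc] <;> linarith
    · by_cases hb : ω ∈ B
      · have hv := hgB ω hb
        split_ifs with h <;> simp [Set.mem_setOf_eq, hv, hc] <;> linarith
      · have hv := hg0 ω hb hc
        split_ifs with h <;> simp [Set.mem_setOf_eq, hv, hc] <;> linarith
  have I1 : (∫ t in Ioi (0 : ℝ), P {ω | t < g ω}) = P B := by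
    have hcong : ∀ t ∈ Ioi (0 : ℝ), P {ω | t < g ω} = (Iio (1 : ℝ)).indicator (fun _ => P B) t := by
      intro t ht
      rw [hset1 t ht]
      by_cases h : t < 1 <;> simp [h, hempty, Set.indicator_apply]
    rw [setIntegral_congr_fun measurableSet_Ioi hcong,
      setIntegral_indicator measurableSet_Iio, Set.Ioi_inter_Iio, setIntegral_const]
    simp [Real.volume_Ioo]
  have I2 : (∫ t in Iio (0 : ℝ), (1 - P {ω | t < g ω})) = P C := by
    have hcong : ∀ t ∈ Iio (0 : ℝ), (1 - P {ω | t < g ω}) = (Ici (-1 : ℝ)).indicator (fun _ => P C) t := by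
      intro t ht
      rw [hset2 t ht]
      by_cases h : (-1 : ℝ) ≤ t <;> simp [h, hcompl, h1, Set.indicator_apply]
    rw [setIntegral_congr_fun measurableSet_Iio hcong,
      setIntegral_indicator measurableSet_Ici, Set.inter_comm, Set.Ici_inter_Iio, setIntegral_const]
    simp [Real.volume_Ico]
  rw [faIntegral, I1, I2]

/-- in the coin-tossing example, any finitely additive probability P
with E_P(X) = 0 for all X ∈ L(ℱ,S) makes (Y n) i.i.d. fair coin tosses; in
particular P equals the fair coin-tossing measure Q₀ on every cylinder event. -/
theorem stmt16 {Ω : Type*} [mΩ : MeasurableSpace Ω]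
    (Y : ℕ → Ω → ℝ)
    (hYval : ∀ n, 1 ≤ n → ∀ ω, Y n ω = 1 ∨ Y n ω = -1)
    (hYmeas : ∀ n, Measurable (Y n))
    (hgen : mΩ = ⨆ n, MeasurableSpace.comap (Y n) (inferInstance : MeasurableSpace ℝ))
    (S : ℕ → Ω → ℝ) (hS : ∀ n ω, S n ω = ∑ i ∈ Finset.Icc 1 n, Y i ω)
    (F : ℕ → MeasurableSpace Ω)
    (hF : ∀ s, F s = ⨆ i ∈ Finset.Icc 1 s,
      MeasurableSpace.comap (Y i) (inferInstance : MeasurableSpace ℝ))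
    (L : Submodule ℝ (Ω → ℝ))
    (hLdef : L = Submodule.span ℝ {f | ∃ s t : ℕ, s < t ∧ ∃ A : Set Ω,
      MeasurableSet[F s] A ∧
      f = fun ω => A.indicator (fun _ => (1 : ℝ)) ω * (S t ω - S s ω)})
    (P : Set Ω → ℝ) (hP : FAP.IsFAPm P)
    (hmart : ∀ X ∈ L, FAP.faIntegral P X = 0) :
    ∀ n : ℕ, 1 ≤ n → ∀ y : ℕ → ℝ, (∀ i, y i = 1 ∨ y i = -1) →
      P {ω | ∀ i ∈ Finset.Icc 1 n, Y i ω = y i} = (1 / 2 : ℝ) ^ n := by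
  suffices H : ∀ n : ℕ, ∀ y : ℕ → ℝ, (∀ i, y i = 1 ∨ y i = -1) →
      P {ω | ∀ i ∈ Finset.Icc 1 n, Y i ω = y i} = (1 / 2 : ℝ) ^ n by
    intro n _ y hy; exact H n y hy
  intro n
  induction n with
  | zero =>
    intro y hy
    have h0 : {ω : Ω | ∀ i ∈ Finset.Icc 1 0, Y i ω = y i} = Set.univ := by
      ext ω; simp
    rw [h0, hP.1]; norm_num
  | succ n ih =>
    intro y hy
    set A := {ω | ∀ i ∈ Finset.Icc 1 n, Y i ω = y i} with hAdef
    have hArep : A = ⋂ i ∈ Finset.Icc 1 n, Y i ⁻¹' {y i} := by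
      ext ω; simp [hAdef]
    have hAmeas : MeasurableSet A := by
      rw [hArep]
      exact Finset.measurableSet_biInter _ fun i _ => hYmeas i (measurableSet_singleton _)
    have hAF : MeasurableSet[F n] A := by
      rw [hArep]
      refine Finset.measurableSet_biInter _ fun i hi => ?_
      have hle : MeasurableSpace.comap (Y i) (inferInstance : MeasurableSpace ℝ) ≤ F n := by
        rw [hF n]
        exact le_iSup₂ (f := fun i (_ : i ∈ Finset.Icc 1 n) =>
          MeasurableSpace.comap (Y i) (inferInstance : MeasurableSpace ℝ)) i hi
      exact hle _ ⟨{y i}, measurableSet_singleton _, rfl⟩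
    set B := A ∩ {ω | Y (n + 1) ω = 1} with hBdef
    set C := A ∩ {ω | Y (n + 1) ω = -1} with hCdef
    have hBmeas : MeasurableSet B :=
      hAmeas.inter (hYmeas (n + 1) (measurableSet_singleton 1))
    have hCmeas : MeasurableSet C :=
      hAmeas.inter (hYmeas (n + 1) (measurableSet_singleton (-1)))
    have hdisj : Disjoint B C := by
      rw [Set.disjoint_left]
      rintro ω ⟨-, h1⟩ ⟨-, h2⟩
      rw [Set.mem_setOf_eq] at h1 h2
      rw [h1] at h2; norm_num at h2
    have hf : (fun ω => A.indicator (fun _ => (1 : ℝ)) ω * (S (n + 1) ω - S n ω))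
        = fun ω => B.indicator (fun _ => (1 : ℝ)) ω - C.indicator (fun _ => (1 : ℝ)) ω := by
      funext ω
      have hSd : S (n + 1) ω - S n ω = Y (n + 1) ω := by
        rw [hS, hS, Finset.sum_Icc_succ_top (by omega : 1 ≤ n + 1)]
        ring
      rw [hSd]
      by_cases hA : ω ∈ A
      · rcases hYval (n + 1) (by omega) ω with h | h
        · have hB : ω ∈ B := ⟨hA, h⟩
          have hC : ω ∉ C := fun hc => by
            have := hc.2; rw [Set.mem_setOf_eq, h] at this; norm_num at this
          simp [Set.indicator_apply, hA, hB, hC, h]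
        · have hB : ω ∉ B := fun hb => by
            have := hb.2; rw [Set.mem_setOf_eq, h] at this; norm_num at this
          have hC : ω ∈ C := ⟨hA, h⟩
          simp [Set.indicator_apply, hA, hB, hC, h]
      · have hB : ω ∉ B := fun hb => hA hb.1
        have hC : ω ∉ C := fun hc => hA hc.1
        simp [Set.indicator_apply, hA, hB, hC]
    have hmem : (fun ω => A.indicator (fun _ => (1 : ℝ)) ω * (S (n + 1) ω - S n ω)) ∈ L := by
      rw [hLdef]
      exact Submodule.subset_span ⟨n, n + 1, Nat.lt_succ_self n, A, hAF, rfl⟩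
    have h0 := hmart _ hmem
    rw [hf, faInt_sub_indicator P hP B C hBmeas hCmeas hdisj] at h0
    have hBC : A = B ∪ C := by
      ext ω
      constructor
      · intro hA
        rcases hYval (n + 1) (by omega) ω with h | h
        · exact Or.inl ⟨hA, h⟩
        · exact Or.inr ⟨hA, h⟩
      · rintro (⟨h, -⟩ | ⟨h, -⟩) <;> exact h
    have hPA : P A = P B + P C := by
      rw [hBC]; exact hP.2.2 B C hBmeas hCmeas hdisj
    have hIH : P A = (1 / 2 : ℝ) ^ n := ih y hy
    have hPB : P B = (1 / 2 : ℝ) ^ (n + 1) := by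
      have : (1 / 2 : ℝ) ^ (n + 1) = (1 / 2 : ℝ) ^ n / 2 := by ring
      rw [this]; linarith
    have hPC : P C = (1 / 2 : ℝ) ^ (n + 1) := by linarith
    have hsplit : ∀ ω : Ω, (∀ i ∈ Finset.Icc 1 (n + 1), Y i ω = y i) ↔
        (ω ∈ A ∧ Y (n + 1) ω = y (n + 1)) := by
      intro ω
      constructor
      · intro h
        refine ⟨fun i hi => h i ?_, h (n + 1) (by simp [Finset.mem_Icc])⟩
        simp only [Finset.mem_Icc] at hi ⊢; omega
      · rintro ⟨hmemA, h2⟩ i hi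
        simp only [Finset.mem_Icc] at hi
        by_cases hin : i = n + 1
        · subst hin; exact h2
        · exact hmemA i (by simp only [Finset.mem_Icc]; omega)
    rcases hy (n + 1) with h | h
    · have hq : {ω | ∀ i ∈ Finset.Icc 1 (n + 1), Y i ω = y i} = B := by
        ext ω
        rw [Set.mem_setOf_eq, hsplit ω, hBdef, Set.mem_inter_iff, Set.mem_setOf_eq, h]
        exact Iff.rfl
      rw [hq]; exact hPB
    · have hq : {ω | ∀ i ∈ Finset.Icc 1 (n + 1), Y i ω = y i} = C := by
        ext ω
        rw [Set.mem_setOf_eq, hsplit ω, hCdef, Set.mem_inter_iff, Set.mem_setOf_eq, h]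
        exact Iff.rfl
      rw [hq]; exact hPC
end
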